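/- arXiv:2307.12472 — 5 statements merged into one kernel-verified Lean document; each statement's English description precedes it below -/
import Mathlib

section
/- If real-valued random variables T_1, ..., T_{n+1} are exchangeable and almost surely pairwise distinct, then the rank of T_{n+1}, defined as rank(T_{n+1}) = 1 + #{i in {1,...,n+1} : T_{n+1} > T_i}, is uniformly distributed on {1, 2, ..., n+1}. -/
/-!
Swapping coordinate `j` with the last one and using exchangeability shows that every coordinate
has the same probability `p` of having exactly `m` coordinates below it. Almost surely the
coordinates are distinct, and then `j ↦ #{i | x i < x j}` is a bijection onto `{0, …, n}`, so
exactly one of these `n + 1` events occurs and `(n + 1) p = 1`.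
-/

open MeasureTheory Finset
open scoped ENNReal

section Combinatorics

variable {ι α : Type*} [Fintype ι] [LinearOrder α]

/-- Zero-based: the paper's rank of `x j` is `coordRank x j + 1`. -/
def coordRank (x : ι → α) (j : ι) : ℕ := #{i | x i < x j}

lemma coordRank_comp_perm (x : ι → α) (σ : Equiv.Perm ι) (j : ι) :
    coordRank (x ∘ σ) j = coordRank x (σ j) :=
  card_equiv σ fun i => by simp

lemma coordRank_lt_card (x : ι → α) (j : ι) : coordRank x j < Fintype.card ι :=
  card_lt_univ_of_notMem (x := j) (by simp)

lemma coordRank_lt_coordRank {x : ι → α} {j k : ι} (h : x j < x k) :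
    coordRank x j < coordRank x k := by
  have hsub : ({i | x i < x j} : Finset ι) ⊆ ({i | x i < x k} : Finset ι) :=
    monotone_filter_right _ fun _ _ hi => hi.trans h
  exact card_lt_card <| (ssubset_iff_of_subset hsub).2 ⟨j, by simp [h], by simp⟩

lemma coordRank_injective {x : ι → α} (hx : Function.Injective x) :
    Function.Injective (coordRank x) := by
  intro j k hjk
  by_contra hne
  rcases (hx.ne hne).lt_or_gt with h | h
  · exact (coordRank_lt_coordRank h).ne hjk
  · exact (coordRank_lt_coordRank h).ne' hjk

lemma exists_coordRank_eq {x : ι → α} (hx : Function.Injective x) {m : ℕ}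
    (hm : m < Fintype.card ι) : ∃ j, coordRank x j = m := by
  let r : ι → Fin (Fintype.card ι) := fun j => ⟨coordRank x j, coordRank_lt_card x j⟩
  have hr : Function.Bijective r :=
    (Fintype.bijective_iff_injective_and_card r).2
      ⟨fun j k h => coordRank_injective hx (Fin.val_eq_of_eq h), by simp⟩
  obtain ⟨j, hj⟩ := hr.surjective ⟨m, hm⟩
  exact ⟨j, Fin.val_eq_of_eq hj⟩

end Combinatorics

section Probability

variable {Ω ι α : Type*} [MeasurableSpace Ω] [Fintype ι]
  [LinearOrder α] [TopologicalSpace α] [OrderClosedTopology α] [SecondCountableTopology α]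
  [MeasurableSpace α] [OpensMeasurableSpace α]

lemma measurable_coordRank (j : ι) : Measurable fun x : ι → α => coordRank x j := by
  simp only [coordRank, card_filter]
  exact Finset.measurable_sum _ fun i _ =>
    Measurable.ite (measurableSet_lt (measurable_pi_apply i) (measurable_pi_apply j))
      measurable_const measurable_const

lemma measure_coordRank_eq_of_exchangeable (P : Measure Ω) {X : Ω → ι → α}
    (hX : Measurable X) (hexch : ∀ σ : Equiv.Perm ι, P.map (fun ω => X ω ∘ σ) = P.map X)
    (m : ℕ) (j k : ι) :
    P {ω | coordRank (X ω) j = m} = P {ω | coordRank (X ω) k = m} := by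
  classical
  have hS : MeasurableSet {x : ι → α | coordRank x k = m} :=
    measurable_coordRank k (measurableSet_singleton m)
  let σ := Equiv.swap k j
  have hXσ : Measurable fun ω => X ω ∘ σ := by fun_prop
  have := congrArg (· {x : ι → α | coordRank x k = m}) (hexch σ)
  rw [Measure.map_apply hXσ hS, Measure.map_apply hX hS] at this
  simpa [Set.preimage, coordRank_comp_perm, σ] using this

lemma sum_measure_coordRank_eq_one (P : Measure Ω) [IsProbabilityMeasure P] {X : Ω → ι → α}
    (hX : Measurable X) (hinj : ∀ᵐ ω ∂P, Function.Injective (X ω)) {m : ℕ}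
    (hm : m < Fintype.card ι) :
    ∑ j, P {ω | coordRank (X ω) j = m} = 1 := by
  have hdisj :
      Pairwise (Function.onFun (AEDisjoint P) fun j => {ω | coordRank (X ω) j = m}) := by
    intro j k hjk
    refine measure_mono_null ?_ (ae_iff.1 hinj)
    intro ω ⟨hj, hk⟩ hω
    exact hjk (coordRank_injective hω (hj.trans hk.symm))
  have hcover : (⋃ j, {ω | coordRank (X ω) j = m}) =ᵐ[P] (Set.univ : Set Ω) := by
    refine ae_eq_univ.2 (measure_mono_null ?_ (ae_iff.1 hinj))
    intro ω hω hinjω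
    obtain ⟨j, hj⟩ := exists_coordRank_eq hinjω hm
    exact hω (Set.mem_iUnion.2 ⟨j, hj⟩)
  have hmeas (j : ι) : MeasurableSet {ω | coordRank (X ω) j = m} :=
    (measurable_coordRank j).comp hX (measurableSet_singleton m)
  calc ∑ j, P {ω | coordRank (X ω) j = m}
      = P (⋃ j, {ω | coordRank (X ω) j = m}) := by
        simpa using (measure_biUnion_finset₀ (s := Finset.univ) (fun j _ k _ hjk => hdisj hjk)
          fun j _ => (hmeas j).nullMeasurableSet).symm
    _ = 1 := by rw [measure_congr hcover, measure_univ]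

lemma measure_coordRank_eq_inv_card (P : Measure Ω) [IsProbabilityMeasure P] {X : Ω → ι → α}
    (hX : Measurable X) (hexch : ∀ σ : Equiv.Perm ι, P.map (fun ω => X ω ∘ σ) = P.map X)
    (hinj : ∀ᵐ ω ∂P, Function.Injective (X ω)) {m : ℕ} (hm : m < Fintype.card ι) (j : ι) :
    P {ω | coordRank (X ω) j = m} = (Fintype.card ι : ℝ≥0∞)⁻¹ := by
  have hsum := sum_measure_coordRank_eq_one P hX hinj hm
  simp only [measure_coordRank_eq_of_exchangeable P hX hexch m _ j, sum_const, card_univ,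
    nsmul_eq_mul] at hsum
  exact ENNReal.eq_inv_of_mul_eq_one_left (by rwa [mul_comm])

end Probability

/-- If `T 0, …, T n` (that is, `n+1` real random variables) are exchangeable and a.s.
pairwise distinct, then `rank(T n) = 1 + #{i : T n > T i}` is uniform on `{1,…,n+1}`. -/
theorem rank_uniform
    {Ω : Type*} [MeasurableSpace Ω] (P : Measure Ω) [IsProbabilityMeasure P]
    (n : ℕ) (T : Fin (n + 1) → Ω → ℝ)
    (hmeas : ∀ i, Measurable (T i))
    (hexch : ∀ σ : Equiv.Perm (Fin (n + 1)),
      Measure.map (fun ω i => T (σ i) ω) P = Measure.map (fun ω i => T i ω) P)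
    (hdistinct : ∀ᵐ ω ∂P, ∀ i j : Fin (n + 1), i ≠ j → T i ω ≠ T j ω) :
    ∀ k ∈ Finset.Icc 1 (n + 1),
      P {ω | 1 + (Finset.univ.filter (fun i : Fin (n + 1) =>
        T (Fin.last n) ω > T i ω)).card = k} = 1 / (n + 1) := by
  intro k hk
  rw [Finset.mem_Icc] at hk
  have hinj : ∀ᵐ ω ∂P, Function.Injective fun i => T i ω := by
    filter_upwards [hdistinct] with ω hω i j using not_imp_not.1 (hω i j)
  have hrank : {ω | 1 + #{i | T (Fin.last n) ω > T i ω} = k} =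
      {ω | coordRank (fun i => T i ω) (Fin.last n) = k - 1} := by
    ext ω
    simp only [Set.mem_ofPred_eq, coordRank, gt_iff_lt]
    omega
  rw [hrank, measure_coordRank_eq_inv_card P (measurable_pi_lambda _ hmeas) hexch hinj
    (by simp only [Fintype.card_fin]; omega)]
  simp
end

section
/- Let T_1, ..., T_{n+1} be exchangeable real-valued random variables and define p_{n+1} = (1/(n+1)) * #{i in {1,...,n+1} : T_i >= T_{n+1}}. Then for every alpha in (0,1), P(p_{n+1} <= alpha) <= alpha. -/
/-!
Let `A j` be the event that `T j` has at most `k` coordinates at or above it. Pointwise, at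
most `k` of these events occur: if `j₀` minimizes `T` among those that occur, every `j` with
`A j` has `T j₀ ≤ T j`, so they all lie among the at most `k` coordinates at or above `T j₀`.
Hence `∑ j, P (A j) ≤ k`, and by exchangeability all `n + 1` summands are equal, giving
`P (A last) ≤ k / (n + 1)`.
-/

open MeasureTheory ProbabilityTheory Finset
open scoped ENNReal

section UpperRank

variable {ι α : Type*} [Fintype ι] [LinearOrder α]

noncomputable def upperRank (x : ι → α) (j : ι) : ℕ :=
  #{i | x j ≤ x i}

theorem card_upperRank_le_le (x : ι → α) (k : ℕ) :
    #{j | upperRank x j ≤ k} ≤ k := by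
  set S : Finset ι := {j | upperRank x j ≤ k}
  rcases S.eq_empty_or_nonempty with hS | hS
  · simp [hS]
  obtain ⟨j₀, hj₀S, hj₀min⟩ := S.exists_min_image x hS
  have hsub : S ⊆ ({i | x j₀ ≤ x i} : Finset ι) := fun i hi => by simpa using hj₀min i hi
  calc #S ≤ upperRank x j₀ := card_le_card hsub
    _ ≤ k := (mem_filter.mp hj₀S).2

theorem upperRank_comp_perm (x : ι → α) (σ : Equiv.Perm ι) (j : ι) :
    upperRank (x ∘ σ) j = upperRank x (σ j) := by
  simp only [upperRank, card_filter, Function.comp_apply]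
  exact Equiv.sum_comp σ fun i => if x (σ j) ≤ x i then 1 else 0

theorem measurable_upperRank [TopologicalSpace α] [OrderClosedTopology α]
    [SecondCountableTopology α] [MeasurableSpace α] [OpensMeasurableSpace α] (j : ι) :
    Measurable fun x : ι → α => upperRank x j := by
  simp only [upperRank, card_filter]
  exact Finset.measurable_sum _ fun i _ =>
    Measurable.ite (measurableSet_le (measurable_pi_apply j) (measurable_pi_apply i))
      measurable_const measurable_const

end UpperRank

open Classical in
theorem sum_measure_le_of_forall_card_le {Ω ι : Type*} [MeasurableSpace Ω] [Fintype ι]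
    (μ : Measure Ω) {A : ι → Set Ω} (hA : ∀ j, MeasurableSet (A j)) {k : ℕ}
    (hk : ∀ ω, #{j | ω ∈ A j} ≤ k) :
    ∑ j, μ (A j) ≤ k * μ Set.univ := by
  have hcount : ∀ ω, ∑ j, (A j).indicator 1 ω ≤ (k : ℝ≥0∞) := fun ω => by
    simpa only [Set.indicator_apply, Pi.one_apply, sum_boole, Nat.cast_le] using hk ω
  calc ∑ j, μ (A j) = ∫⁻ ω, ∑ j, (A j).indicator 1 ω ∂μ := by
        rw [lintegral_finsetSum _ fun j _ => measurable_one.indicator (hA j)]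
        simp only [lintegral_indicator_one (hA _)]
    _ ≤ ∫⁻ _, (k : ℝ≥0∞) ∂μ := lintegral_mono hcount
    _ = k * μ Set.univ := lintegral_const _

section Exchangeable

variable {Ω ι α : Type*} [MeasurableSpace Ω] [MeasurableSpace α]
  {P : Measure Ω} {T : ι → Ω → α}

theorem measure_preimage_perm_eq (hT : ∀ i, Measurable (T i))
    (hexch : ∀ σ : Equiv.Perm ι,
      Measure.map (fun ω i => T (σ i) ω) P = Measure.map (fun ω i => T i ω) P)
    (σ : Equiv.Perm ι) {s : Set (ι → α)} (hs : MeasurableSet s) :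
    P ((fun ω i => T (σ i) ω) ⁻¹' s) = P ((fun ω i => T i ω) ⁻¹' s) := by
  rw [← Measure.map_apply (measurable_pi_lambda _ fun i => hT (σ i)) hs, hexch σ,
    Measure.map_apply (measurable_pi_lambda _ hT) hs]

variable [Fintype ι] [LinearOrder α] [TopologicalSpace α] [OrderClosedTopology α]
  [SecondCountableTopology α] [OpensMeasurableSpace α]

theorem measure_upperRank_le_eq (hT : ∀ i, Measurable (T i))
    (hexch : ∀ σ : Equiv.Perm ι,
      Measure.map (fun ω i => T (σ i) ω) P = Measure.map (fun ω i => T i ω) P)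
    (k : ℕ) (i j : ι) :
    P {ω | upperRank (fun l => T l ω) i ≤ k} =
      P {ω | upperRank (fun l => T l ω) j ≤ k} := by
  classical
  calc P {ω | upperRank (fun l => T l ω) i ≤ k}
      = P ((fun ω l => T (Equiv.swap i j l) ω) ⁻¹' {x | upperRank x j ≤ k}) := by
        congr 1
        ext ω
        change upperRank _ i ≤ k ↔ upperRank ((fun l => T l ω) ∘ Equiv.swap i j) j ≤ k
        rw [upperRank_comp_perm, Equiv.swap_apply_right]
    _ = P {ω | upperRank (fun l => T l ω) j ≤ k} :=
        measure_preimage_perm_eq hT hexch _ (measurable_upperRank j measurableSet_Iic)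

theorem card_mul_measure_upperRank_le (hT : ∀ i, Measurable (T i))
    (hexch : ∀ σ : Equiv.Perm ι,
      Measure.map (fun ω i => T (σ i) ω) P = Measure.map (fun ω i => T i ω) P)
    (k : ℕ) (j : ι) :
    Fintype.card ι * P {ω | upperRank (fun l => T l ω) j ≤ k} ≤ k * P Set.univ := by
  have hA : ∀ i, MeasurableSet {ω | upperRank (fun l => T l ω) i ≤ k} := fun i =>
    (measurable_upperRank i).comp (measurable_pi_lambda _ hT) measurableSet_Iic
  calc (Fintype.card ι : ℝ≥0∞) * P {ω | upperRank (fun l => T l ω) j ≤ k}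
      = ∑ i, P {ω | upperRank (fun l => T l ω) i ≤ k} := by
        simp [measure_upperRank_le_eq hT hexch k _ j]
    _ ≤ k * P Set.univ := sum_measure_le_of_forall_card_le P hA fun ω => by
        convert card_upperRank_le_le (fun l => T l ω) k
        exact Iff.rfl

end Exchangeable

/-- Conformal p-value super-uniformity: if `T 0, …, T n` are exchangeable and
`p = #{i : T i ≥ T n} / (n+1)`, then `P(p ≤ α) ≤ α` for all `α ∈ (0,1)`. -/
theorem conformal_p_value_superuniform
    {Ω : Type*} [MeasurableSpace Ω] (P : Measure Ω) [IsProbabilityMeasure P]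
    (n : ℕ) (T : Fin (n + 1) → Ω → ℝ)
    (hmeas : ∀ i, Measurable (T i))
    (hexch : ∀ σ : Equiv.Perm (Fin (n + 1)),
      Measure.map (fun ω i => T (σ i) ω) P = Measure.map (fun ω i => T i ω) P)
    (α : ℝ) (hα : α ∈ Set.Ioo (0 : ℝ) 1) :
    P {ω | ((Finset.univ.filter (fun i : Fin (n + 1) =>
        T i ω ≥ T (Fin.last n) ω)).card : ℝ) / (n + 1) ≤ α} ≤ ENNReal.ofReal α := by
  have hα0 : 0 ≤ α := hα.1.le
  set k := ⌊α * (n + 1)⌋₊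
  have hevent : {ω | ((Finset.univ.filter (fun i : Fin (n + 1) =>
      T i ω ≥ T (Fin.last n) ω)).card : ℝ) / (n + 1) ≤ α} =
      {ω | upperRank (fun l => T l ω) (Fin.last n) ≤ k} := by
    ext ω
    exact (div_le_iff₀ (by positivity : (0 : ℝ) < n + 1)).trans
      (Nat.le_floor_iff (by positivity)).symm
  have hbound := card_mul_measure_upperRank_le hmeas hexch k (Fin.last n)
  rw [Fintype.card_fin, measure_univ, mul_one] at hbound
  have hk : (k : ℝ≥0∞) ≤ (n + 1 : ℕ) * ENNReal.ofReal α := by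
    rw [← ENNReal.ofReal_natCast, ← ENNReal.ofReal_natCast,
      ← ENNReal.ofReal_mul (by positivity)]
    have hfloor : (k : ℝ) ≤ α * (n + 1) := Nat.floor_le (by positivity)
    exact ENNReal.ofReal_le_ofReal (by push_cast; linarith)
  rw [hevent, ← ENNReal.mul_le_mul_iff_right (a := ((n + 1 : ℕ) : ℝ≥0∞)) (by simp)
    (ENNReal.natCast_ne_top _)]
  exact hbound.trans hk
end

section
/- Let Y_1, ..., Y_n be i.i.d. continuous real random variables with distribution P, let A_n(v) = (Y_{(v-1)}, Y_{(v)}] be the interval between consecutive order statistics for v in {2,...,n}, and let Pi assign measure 1/(n+1) to each such A_n(v). Then for any tau in [0,1), epsilon > 0, and n large enough that n > max((n^tau - epsilon)/epsilon, epsilon/(n^tau - epsilon)), P(n^tau * |Pi(A_n(v)) - P(A_n(v))| > epsilon) <= exp(-n^{1-tau} * epsilon). -/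
/-!
Once `n ^ τ < ε (n + 1)`, the event forces the spacing `G = F(Y_(v)) - F(Y_(v-1))` above
`t = 1 / (n + 1) + ε / n ^ τ`. Since `F(Y_1), …, F(Y_n)` are i.i.d. uniform, `G` is a uniform
spacing and `P(G > t) = (1 - t) ^ n ≤ exp (-n t) ≤ exp (-n ^ (1 - τ) ε)`.

To compute the tail, condition on the observation `y` of rank `v - 1`: exactly `v - 1` of the
other observations lie below `y`, and all remaining ones have `F`-value above `F y + t`. By the
probability integral transform this is the Beta integral
`n * choose (n-1) (v-1) * ∫₀^{1-t} u^(v-1) (1 - t - u)^(n-v) du = (1 - t) ^ n`.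
-/

open MeasureTheory ProbabilityTheory Set Function
open scoped ENNReal Nat Finset

namespace ProbabilityTheory

variable {ν : Measure ℝ} [IsProbabilityMeasure ν]

lemma measure_Ioc_eq_ofReal_cdf_sub (a b : ℝ) :
    ν (Ioc a b) = ENNReal.ofReal (cdf ν b - cdf ν a) := by
  conv_lhs => rw [← measure_cdf ν]
  exact (cdf ν).measure_Ioc a b

lemma nullSingletonClass_of_continuous_cdf (h : Continuous (cdf ν)) : NullSingletonClass ν := by
  refine ⟨fun a => ?_⟩
  rw [← measure_cdf ν, StieltjesFunction.measure_singleton,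
    leftLim_eq_of_tendsto ((h.tendsto a).mono_left nhdsWithin_le_nhds)]
  simp

lemma measure_Iio_eq_ofReal_cdf [NullSingletonClass ν] (y : ℝ) :
    ν (Iio y) = ENNReal.ofReal (cdf ν y) := by
  rw [measure_congr Iio_ae_eq_Iic, ofReal_cdf]

/-- The sublevel set is a closed half-line `Iic q`, and `cdf ν q = c` by the intermediate value
theorem. -/
lemma measure_cdf_le (h : Continuous (cdf ν)) {c : ℝ} (hc0 : 0 ≤ c) (hc1 : c < 1) :
    ν {x | cdf ν x ≤ c} = ENNReal.ofReal c := by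
  set S := {x | cdf ν x ≤ c}
  rcases S.eq_empty_or_nonempty with hS | ⟨a, ha⟩
  · have hc : c ≤ 0 := ge_of_tendsto' (tendsto_cdf_atBot ν) fun x =>
      (not_le.1 fun hx => (hS.subset (show x ∈ S from hx) : x ∈ (∅ : Set ℝ))).le
    rw [hS, measure_empty, le_antisymm hc hc0, ENNReal.ofReal_zero]
  obtain ⟨b, hb⟩ := ((tendsto_cdf_atTop ν).eventually (lt_mem_nhds hc1)).exists
  have hSb : ∀ x ∈ S, x ≤ b := fun x hx =>
    le_of_not_gt fun hbx => (hb.trans_le (monotone_cdf ν hbx.le)).not_ge hx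
  have hQS : sSup S ∈ S := (isClosed_le h continuous_const).csSup_mem ⟨a, ha⟩ ⟨b, hSb⟩
  have hS : S = Iic (sSup S) := Set.ext fun x =>
    ⟨fun hx => le_csSup ⟨b, hSb⟩ hx, fun hx => (monotone_cdf ν hx).trans hQS⟩
  obtain ⟨q, hq, hqc⟩ : ∃ q ∈ Icc (sSup S) b, cdf ν q = c :=
    intermediate_value_Icc (hSb _ hQS) h.continuousOn ⟨hQS, hb.le⟩
  have hqQ : q = sSup S := le_antisymm (le_csSup ⟨b, hSb⟩ hqc.le) hq.1
  rw [hS, ← ofReal_cdf, ← hqQ, hqc]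

lemma map_cdf_eq_restrict_Ioc (h : Continuous (cdf ν)) :
    ν.map (cdf ν) = volume.restrict (Ioc 0 1) := by
  have : IsProbabilityMeasure (ν.map (cdf ν)) := Measure.isProbabilityMeasure_map h.aemeasurable
  refine Measure.ext_of_Iic _ _ fun c => ?_
  rw [Measure.map_apply h.measurable measurableSet_Iic, Measure.restrict_apply measurableSet_Iic]
  rcases lt_or_ge c 0 with hc0 | hc0
  · have hF : cdf ν ⁻¹' Iic c = ∅ :=
      eq_empty_of_forall_notMem fun x hx => (hc0.trans_le (cdf_nonneg ν x)).not_ge hx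
    have hI : Iic c ∩ Ioc 0 1 = ∅ :=
      eq_empty_of_forall_notMem fun x hx => (hc0.trans (hx.2.1.trans_le hx.1)).false
    rw [hF, hI, measure_empty, measure_empty]
  rcases lt_or_ge c 1 with hc1 | hc1
  · rw [Iic_inter_Ioc_of_le hc1.le, Real.volume_Ioc, sub_zero]
    exact measure_cdf_le h hc0 hc1
  · have hF : cdf ν ⁻¹' Iic c = univ := eq_univ_of_forall fun x => (cdf_le_one ν x).trans hc1
    rw [hF, inter_eq_right.2 (Ioc_subset_Iic_self.trans (Iic_subset_Iic.2 hc1))]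
    simp

lemma measure_lt_cdf (h : Continuous (cdf ν)) {c : ℝ} (hc : 0 ≤ c) :
    ν {x | c < cdf ν x} = ENNReal.ofReal (1 - c) := by
  change ν (cdf ν ⁻¹' Ioi c) = _
  rw [← Measure.map_apply h.measurable measurableSet_Ioi, map_cdf_eq_restrict_Ioc h,
    Measure.restrict_apply measurableSet_Ioi, ← Real.volume_Ioc]
  congr 1
  exact Set.ext fun x =>
    ⟨fun ⟨h1, _, h3⟩ => ⟨h1, h3⟩, fun ⟨h1, h3⟩ => ⟨h1, hc.trans_lt h1, h3⟩⟩

lemma lintegral_comp_cdf (h : Continuous (cdf ν)) {g : ℝ → ℝ≥0∞} (hg : Measurable g) :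
    ∫⁻ x, g (cdf ν x) ∂ν = ∫⁻ u in Ioc 0 1, g u := by
  rw [← lintegral_map hg h.measurable, map_cdf_eq_restrict_Ioc h]

end ProbabilityTheory

theorem integral_pow_mul_sub_pow (a b : ℕ) (s : ℝ) :
    ∫ x in (0 : ℝ)..s, x ^ a * (s - x) ^ b = a ! * b ! / (a + b + 1)! * s ^ (a + b + 1) := by
  induction b generalizing a with
  | zero =>
    simp only [pow_zero, mul_one, integral_pow, Nat.factorial_zero, add_zero,
      Nat.factorial_succ, Nat.cast_mul, Nat.cast_succ]
    have : (a ! : ℝ) ≠ 0 := by positivity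
    field_simp
    simp
  | succ b ih =>
    have hu : ∀ x ∈ uIcc 0 s,
        HasDerivAt (fun x => (s - x) ^ (b + 1)) (-((b + 1) * (s - x) ^ b)) x := fun x _ => by
      simpa using ((hasDerivAt_id x).const_sub s).fun_pow (b + 1)
    have hv : ∀ x ∈ uIcc 0 s, HasDerivAt (fun x : ℝ => x ^ (a + 1) / (a + 1)) (x ^ a) x :=
      fun x _ => by
        refine (((hasDerivAt_id x).fun_pow (a + 1)).div_const ((a : ℝ) + 1)).congr_deriv ?_
        simp only [id, Nat.add_sub_cancel, mul_one]
        push_cast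
        field_simp
    have hparts := intervalIntegral.integral_mul_deriv_eq_deriv_mul hu hv
      ((by fun_prop : Continuous fun x : ℝ => -((b + 1) * (s - x) ^ b)).intervalIntegrable _ _)
      ((by fun_prop : Continuous fun x : ℝ => x ^ a).intervalIntegrable _ _)
    calc ∫ x in (0 : ℝ)..s, x ^ a * (s - x) ^ (b + 1)
        = ∫ x in (0 : ℝ)..s, (s - x) ^ (b + 1) * x ^ a := by simp only [mul_comm]
      _ = (b + 1) / (a + 1) * ∫ x in (0 : ℝ)..s, x ^ (a + 1) * (s - x) ^ b := by
        rw [hparts, ← intervalIntegral.integral_const_mul]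
        simp only [sub_self, zero_pow (Nat.succ_ne_zero _), zero_mul, zero_div, mul_zero,
          sub_zero, zero_sub, ← intervalIntegral.integral_neg]
        congr 1
        ext x
        field_simp
      _ = a ! * (b + 1)! / (a + (b + 1) + 1)! * s ^ (a + (b + 1) + 1) := by
        rw [ih, show a + 1 + b + 1 = a + (b + 1) + 1 by ring, Nat.factorial_succ a,
          Nat.factorial_succ b]
        push_cast
        field_simp

lemma setLIntegral_Ioc_ofReal_pow_mul_ofReal_sub_pow (a : ℕ) {b : ℕ} (hb : b ≠ 0) {s : ℝ}
    (hs0 : 0 ≤ s) (hs1 : s ≤ 1) :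
    ∫⁻ u in Ioc 0 1, ENNReal.ofReal u ^ a * ENNReal.ofReal (s - u) ^ b =
      ENNReal.ofReal (a ! * b ! / (a + b + 1)! * s ^ (a + b + 1)) := by
  have hright : ∫⁻ u in Ioc s 1, ENNReal.ofReal u ^ a * ENNReal.ofReal (s - u) ^ b = 0 := by
    refine (setLIntegral_congr_fun measurableSet_Ioc fun u hu => ?_).trans lintegral_zero
    rw [ENNReal.ofReal_eq_zero.2 (sub_nonpos.2 hu.1.le), zero_pow hb, mul_zero]
  have hleft : ∀ u ∈ Ioc 0 s, ENNReal.ofReal u ^ a * ENNReal.ofReal (s - u) ^ b =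
      ENNReal.ofReal (u ^ a * (s - u) ^ b) := fun u hu => by
    rw [ENNReal.ofReal_mul (pow_nonneg hu.1.le a), ENNReal.ofReal_pow hu.1.le,
      ENNReal.ofReal_pow (sub_nonneg.2 hu.2)]
  rw [← Ioc_union_Ioc_eq_Ioc hs0 hs1, lintegral_union measurableSet_Ioc
      (Ioc_disjoint_Ioc_of_le le_rfl), hright, add_zero,
    setLIntegral_congr_fun measurableSet_Ioc hleft,
    ← ofReal_integral_eq_lintegral_ofReal
      (by fun_prop : Continuous fun u : ℝ => u ^ a * (s - u) ^ b).integrableOn_Ioc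
      ((ae_restrict_iff' measurableSet_Ioc).2 (.of_forall fun u hu =>
        mul_nonneg (pow_nonneg hu.1.le a) (pow_nonneg (sub_nonneg.2 hu.2) b))),
    ← intervalIntegral.integral_of_le hs0, integral_pow_mul_sub_pow]

lemma add_one_mul_choose_mul_factorial_mul_factorial_div {m k : ℕ} (hkm : k ≤ m) :
    ((m + 1 : ℕ) : ℝ) * m.choose k * (k ! * (m - k)! / (m + 1)!) = 1 := by
  have : (m.choose k : ℝ) ≠ 0 := Nat.cast_ne_zero.2 (Nat.choose_pos hkm).ne'
  rw [Nat.factorial_succ, ← Nat.choose_mul_factorial_mul_factorial hkm]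
  push_cast
  field_simp

namespace MeasureTheory.Measure

variable {α : Type*} [MeasurableSpace α] {μ : Measure α} [SigmaFinite μ] {m : ℕ}

lemma pi_apply_eq_lintegral_insertNth (i : Fin (m + 1)) {S : Set (Fin (m + 1) → α)}
    (hS : MeasurableSet S) :
    Measure.pi (fun _ => μ) S =
      ∫⁻ y, Measure.pi (fun _ : Fin m => μ) {z | Fin.insertNth i y z ∈ S} ∂μ := by
  have he := (measurePreserving_piFinSuccAbove (fun _ : Fin (m + 1) => μ) i).symm
  rw [← he.measure_preimage hS.nullMeasurableSet,
    Measure.prod_apply (hS.preimage (MeasurableEquiv.measurable _))]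
  rfl

lemma pi_coord_eq_coord_eq_zero [MeasurableEq α] [NullSingletonClass μ] {i j : Fin (m + 1)}
    (hij : i ≠ j) : Measure.pi (fun _ => μ) {x | x i = x j} = 0 := by
  obtain ⟨j', rfl⟩ := Fin.exists_succAbove_eq hij.symm
  rw [pi_apply_eq_lintegral_insertNth i
    (measurableSet_eq_fun (measurable_pi_apply i) (measurable_pi_apply _))]
  refine (lintegral_congr fun y => ?_).trans lintegral_zero
  simp only [Set.mem_ofPred_eq, Fin.insertNth_apply_same, Fin.insertNth_apply_succAbove,
    eq_comm (a := y)]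
  exact pi_hyperplane (fun _ => μ) j' y

lemma pi_not_injective_eq_zero [MeasurableEq α] [NullSingletonClass μ] :
    Measure.pi (fun _ : Fin (m + 1) => μ) {x | ¬Injective x} = 0 := by
  refine measure_mono_null (fun x hx => ?_) <|
    measure_iUnion_null fun p : Fin (m + 1) × Fin (m + 1) =>
      measure_iUnion_null fun hp : p.1 ≠ p.2 => pi_coord_eq_coord_eq_zero hp
  obtain ⟨i, j, hxij, hij⟩ := Function.not_injective_iff.1 hx
  exact mem_iUnion₂.2 ⟨(i, j), hij, hxij⟩

open Classical Finset in
/-- Union bound over the `m.choose k` choices of the coordinates that land in `A`. -/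
lemma pi_card_filter_mem_le (k : ℕ) (A H : Set α) :
    Measure.pi (fun _ : Fin m => μ)
        {z | #{j | z j ∈ A} = k ∧ ∀ j, z j ∈ A ∨ z j ∈ H} ≤
      m.choose k * μ A ^ k * μ H ^ (m - k) := by
  have hsub : {z : Fin m → α | #{j | z j ∈ A} = k ∧ ∀ j, z j ∈ A ∨ z j ∈ H} ⊆
      ⋃ T ∈ powersetCard k (univ : Finset (Fin m)),
        Set.pi univ fun j => if j ∈ T then A else H := by
    rintro z ⟨hcard, hall⟩
    refine mem_biUnion (mem_powersetCard.2 ⟨subset_univ _, hcard⟩) fun j _ => ?_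
    by_cases hj : z j ∈ A
    · simp [hj]
    · simpa [hj] using (hall j).resolve_left hj
  have hbox : ∀ T ∈ powersetCard k (univ : Finset (Fin m)),
      Measure.pi (fun _ => μ) (Set.pi univ fun j => if j ∈ T then A else H) =
        μ A ^ k * μ H ^ (m - k) := fun T hT => by
    rw [mem_powersetCard] at hT
    rw [Measure.pi_pi, Finset.prod_congr rfl fun j _ => apply_ite μ _ _ _, Finset.prod_ite,
      prod_const, prod_const, filter_univ_mem, filter_not, filter_univ_mem, card_sdiff,
      Finset.inter_univ, hT.2, card_univ, Fintype.card_fin]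
  calc _ ≤ ∑ T ∈ powersetCard k (univ : Finset (Fin m)),
        Measure.pi (fun _ => μ) (Set.pi univ fun j => if j ∈ T then A else H) :=
        (measure_mono hsub).trans (measure_biUnion_finset_le _ _)
    _ = m.choose k * μ A ^ k * μ H ^ (m - k) := by
      rw [Finset.sum_congr rfl hbox, sum_const, card_powersetCard, card_univ, Fintype.card_fin,
        nsmul_eq_mul, mul_assoc]

end MeasureTheory.Measure

section RankGap

def rankGapSet {n : ℕ} (g : ℝ → ℝ) (t : ℝ) (k : ℕ) (i : Fin n) : Set (Fin n → ℝ) :=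
  {x | #{j | x j < x i} = k ∧ ∀ j ≠ i, x j < x i ∨ g (x i) + t < g (x j)}

variable {n : ℕ} {g : ℝ → ℝ} {t : ℝ}

lemma measurableSet_rankGapSet (hg : Measurable g) (k : ℕ) (i : Fin n) :
    MeasurableSet (rankGapSet g t k i) := by
  have hlt : ∀ j, MeasurableSet {x : Fin n → ℝ | x j < x i} := fun j =>
    measurableSet_lt (measurable_pi_apply j) (measurable_pi_apply i)
  have hcard : Measurable fun x : Fin n → ℝ => #{j | x j < x i} := by
    simp only [Finset.card_filter]
    exact Finset.measurable_sum _ fun j _ => measurable_const.ite (hlt j) measurable_const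
  simp only [rankGapSet, ofPred_and, ofPred_forall, ofPred_or]
  exact (hcard (measurableSet_singleton k)).inter (.iInter fun j => .iInter fun _ =>
    (hlt j).union (measurableSet_lt ((hg.comp (measurable_pi_apply i)).add_const t)
      (hg.comp (measurable_pi_apply j))))

lemma mem_rankGapSet_sort (hg : Monotone g) {x : Fin n → ℝ} (hx : Injective x) {i j : Fin n}
    (hij : (i : ℕ) + 1 = j) (hgap : t < g (x (Tuple.sort x j)) - g (x (Tuple.sort x i))) :
    x ∈ rankGapSet g t i (Tuple.sort x i) := by
  set σ := Tuple.sort x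
  have hs : StrictMono (x ∘ σ) :=
    (Tuple.monotone_sort x).strictMono_of_injective (hx.comp σ.injective)
  refine ⟨?_, fun l hl => ?_⟩
  · have hperm : #{l | x l < x (σ i)} = #{p | x (σ p) < x (σ i)} :=
      Finset.card_equiv σ.symm fun l => by simp
    rw [hperm]
    simp only [← Function.comp_apply (f := x), hs.lt_iff_lt, Finset.filter_gt_eq_Iio,
      Fin.card_Iio]
  · obtain ⟨p, rfl⟩ := σ.surjective l
    rcases lt_or_gt_of_ne (hs.injective.ne (σ.injective.ne_iff.1 hl) : x (σ p) ≠ x (σ i))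
      with hlt | hgt
    · exact Or.inl hlt
    · have hjp : j ≤ p := by
        have := hs.lt_iff_lt.1 hgt
        omega
      have hmono : g (x (σ j)) ≤ g (x (σ p)) := hg (Tuple.monotone_sort x hjp)
      exact Or.inr (by linarith)

lemma insertNth_mem_rankGapSet_iff {m : ℕ} (k : ℕ) (i : Fin (m + 1)) (y : ℝ)
    (z : Fin m → ℝ) :
    Fin.insertNth i y z ∈ rankGapSet g t k i ↔
      #{j | z j < y} = k ∧ ∀ j, z j < y ∨ g y + t < g (z j) := by
  have hcount : #{l | Fin.insertNth (α := fun _ => ℝ) i y z l < y} = #{j | z j < y} := by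
    simp only [Finset.card_filter, Fin.sum_univ_succAbove _ i, Fin.insertNth_apply_same,
      Fin.insertNth_apply_succAbove, lt_irrefl, if_false, zero_add]
  simp only [rankGapSet, Set.mem_ofPred_eq, Fin.insertNth_apply_same, hcount,
    Fin.forall_iff_succAbove i, ne_eq, not_true_eq_false, IsEmpty.forall_iff, Fin.succAbove_ne,
    not_false_eq_true, Fin.insertNth_apply_succAbove, forall_const, true_and]

end RankGap

namespace ProbabilityTheory

variable {ν : Measure ℝ} [IsProbabilityMeasure ν] {n : ℕ} {t : ℝ}

/-- Fubini in the `i`-th coordinate `y`: `k` of the other `m` coordinates fall below `y`, the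
remaining ones have `cdf ν`-value above `cdf ν y + t`, and `cdf ν y` is uniform. -/
lemma pi_rankGapSet_cdf_le (h : Continuous (cdf ν)) (ht0 : 0 ≤ t) (ht1 : t ≤ 1) {m k : ℕ}
    (hkm : k < m) (i : Fin (m + 1)) :
    Measure.pi (fun _ => ν) (rankGapSet (cdf ν) t k i) ≤
      m.choose k * ENNReal.ofReal (k ! * (m - k)! / (m + 1)! * (1 - t) ^ (m + 1)) := by
  have : NullSingletonClass ν := nullSingletonClass_of_continuous_cdf h
  set f : ℝ → ℝ≥0∞ := fun u => ENNReal.ofReal u ^ k * ENNReal.ofReal (1 - t - u) ^ (m - k)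
  have hf : Measurable f := by fun_prop
  have hslice : ∀ y, Measure.pi (fun _ : Fin m => ν)
      {z | Fin.insertNth i y z ∈ rankGapSet (cdf ν) t k i} ≤ m.choose k * f (cdf ν y) := by
    intro y
    simp only [insertNth_mem_rankGapSet_iff]
    refine (Measure.pi_card_filter_mem_le k (Iio y) {w | cdf ν y + t < cdf ν w}).trans_eq ?_
    rw [measure_Iio_eq_ofReal_cdf, measure_lt_cdf h (by positivity [cdf_nonneg ν y]),
      sub_add_eq_sub_sub_swap, mul_assoc]
  calc Measure.pi (fun _ => ν) (rankGapSet (cdf ν) t k i)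
      ≤ ∫⁻ y, m.choose k * f (cdf ν y) ∂ν := by
        rw [Measure.pi_apply_eq_lintegral_insertNth i (measurableSet_rankGapSet h.measurable k i)]
        exact lintegral_mono hslice
    _ = m.choose k * ∫⁻ u in Ioc 0 1, f u := by
        rw [lintegral_const_mul' _ _ (ENNReal.natCast_ne_top _), lintegral_comp_cdf h hf]
    _ = _ := by
        rw [setLIntegral_Ioc_ofReal_pow_mul_ofReal_sub_pow k (Nat.sub_ne_zero_of_lt hkm)
          (sub_nonneg.2 ht1) (by linarith), Nat.add_sub_cancel' hkm.le]

theorem pi_cdf_sort_spacing_gt_le (h : Continuous (cdf ν)) {i j : Fin n} (hij : (i : ℕ) + 1 = j)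
    (ht0 : 0 ≤ t) (ht1 : t ≤ 1) :
    Measure.pi (fun _ : Fin n => ν)
        {x | t < cdf ν (x (Tuple.sort x j)) - cdf ν (x (Tuple.sort x i))} ≤
      ENNReal.ofReal ((1 - t) ^ n) := by
  obtain ⟨m, rfl⟩ := Nat.exists_eq_add_one.2 i.pos
  have : NullSingletonClass ν := nullSingletonClass_of_continuous_cdf h
  have him : (i : ℕ) < m := by omega
  have hsub : {x | t < cdf ν (x (Tuple.sort x j)) - cdf ν (x (Tuple.sort x i))} ⊆
      {x | ¬Injective x} ∪ ⋃ l, rankGapSet (cdf ν) t i l := fun x hx => by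
    by_cases hx' : Injective x
    · exact Or.inr (mem_iUnion.2 ⟨_, mem_rankGapSet_sort (monotone_cdf ν) hx' hij hx⟩)
    · exact Or.inl hx'
  calc _ ≤ Measure.pi (fun _ => ν) {x | ¬Injective x} +
        Measure.pi (fun _ => ν) (⋃ l, rankGapSet (cdf ν) t i l) :=
        (measure_mono hsub).trans (measure_union_le _ _)
    _ ≤ 0 + ∑ _l : Fin (m + 1),
        m.choose i * ENNReal.ofReal (i ! * (m - i)! / (m + 1)! * (1 - t) ^ (m + 1)) :=
        add_le_add Measure.pi_not_injective_eq_zero.le ((measure_iUnion_fintype_le _ _).trans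
          (Finset.sum_le_sum fun l _ => pi_rankGapSet_cdf_le h ht0 ht1 him l))
    _ = ENNReal.ofReal ((1 - t) ^ (m + 1)) := by
        rw [zero_add, Finset.sum_const, Finset.card_univ, Fintype.card_fin, nsmul_eq_mul,
          ← ENNReal.ofReal_natCast, ← ENNReal.ofReal_natCast,
          ← ENNReal.ofReal_mul (by positivity), ← ENNReal.ofReal_mul (by positivity),
          ← mul_assoc, ← mul_assoc,
          add_one_mul_choose_mul_factorial_mul_factorial_div him.le, one_mul]

theorem pi_cdf_sort_spacing_gt_le_exp (h : Continuous (cdf ν)) {i j : Fin n}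
    (hij : (i : ℕ) + 1 = j) (ht0 : 0 ≤ t) :
    Measure.pi (fun _ : Fin n => ν)
        {x | t < cdf ν (x (Tuple.sort x j)) - cdf ν (x (Tuple.sort x i))} ≤
      ENNReal.ofReal (Real.exp (-n * t)) := by
  rcases le_or_gt t 1 with ht1 | ht1
  · refine (pi_cdf_sort_spacing_gt_le h hij ht0 ht1).trans (ENNReal.ofReal_le_ofReal ?_)
    calc (1 - t) ^ n ≤ Real.exp (-t) ^ n :=
          pow_le_pow_left₀ (sub_nonneg.2 ht1) (Real.one_sub_le_exp_neg t) n
      _ = Real.exp (-n * t) := by rw [← Real.exp_nat_mul, mul_neg, neg_mul]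
  · refine (measure_mono_null (fun x hx => ?_) measure_empty).trans_le zero_le
    linarith [hx.out, cdf_le_one ν (x (Tuple.sort x j)), cdf_nonneg ν (x (Tuple.sort x i))]

end ProbabilityTheory

lemma add_div_rpow_lt_of_lt_rpow_mul_abs_sub {N τ ε g : ℝ} (hN : 0 < N) (hε : 0 < ε)
    (hg : 0 ≤ g) (hlarge : (N ^ τ - ε) / ε < N) (h : ε < N ^ τ * |1 / (N + 1) - g|) :
    1 / (N + 1) + ε / N ^ τ < g := by
  have hNτ : 0 < N ^ τ := Real.rpow_pos_of_pos hN τ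
  have hsmall : 1 / (N + 1) < ε / N ^ τ := by
    rw [div_lt_iff₀ hε] at hlarge
    rw [div_lt_div_iff₀ (by linarith) hNτ]
    linarith
  have habs : ε / N ^ τ < |1 / (N + 1) - g| := by rwa [div_lt_iff₀' hNτ]
  rcases lt_abs.1 habs with h' | h' <;> linarith

lemma rpow_one_sub_mul_le_mul_add_div_rpow {N : ℝ} (hN : 0 < N) (τ ε : ℝ) :
    N ^ (1 - τ) * ε ≤ N * (1 / (N + 1) + ε / N ^ τ) := by
  rw [Real.rpow_sub hN, Real.rpow_one, mul_add, div_mul_comm, mul_comm _ N]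
  exact le_add_of_nonneg_left (by positivity)

theorem focal_set_concentration_general
    {Ω : Type*} [MeasurableSpace Ω] (P : Measure Ω) [IsProbabilityMeasure P]
    (n : ℕ) (Y : Fin n → Ω → ℝ)
    (hindep : iIndepFun Y P)
    (ν : Measure ℝ) [IsProbabilityMeasure ν]
    (hident : ∀ i, Measure.map (Y i) P = ν)
    (F : ℝ → ℝ) (hF : ∀ y, F y = (ν (Set.Iic y)).toReal)
    (hFcont : Continuous F)
    (sorted : Ω → Fin n → ℝ)
    (hsorted : ∀ ω i, sorted ω i = Y (Tuple.sort (fun j => Y j ω) i) ω)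
    (v : Fin n) (hv : 1 ≤ (v : ℕ))
    (τ : ℝ) (ε : ℝ) (hε : 0 < ε)
    (hlarge : (n : ℝ) > max (((n : ℝ) ^ τ - ε) / ε) (ε / ((n : ℝ) ^ τ - ε))) :
    P {ω | (n : ℝ) ^ τ *
        |1 / ((n : ℝ) + 1) -
          (ν (Set.Ioc (sorted ω ⟨(v : ℕ) - 1, lt_of_le_of_lt (Nat.sub_le _ _) v.isLt⟩)
            (sorted ω v))).toReal| > ε}
      ≤ ENNReal.ofReal (Real.exp (-(n : ℝ) ^ (1 - τ) * ε)) := by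
  obtain rfl : F = cdf ν := funext fun y => by rw [hF, cdf_eq_real, measureReal_def]
  have hY : ∀ i, AEMeasurable (Y i) P := fun i =>
    .of_map_ne_zero (by rw [hident i]; exact IsProbabilityMeasure.ne_zero ν)
  have hn : (0 : ℝ) < n := Nat.cast_pos.2 v.pos
  set i : Fin n := ⟨(v : ℕ) - 1, lt_of_le_of_lt (Nat.sub_le _ _) v.isLt⟩
  set t : ℝ := 1 / ((n : ℝ) + 1) + ε / (n : ℝ) ^ τ
  set S := {x : Fin n → ℝ | t < cdf ν (x (Tuple.sort x v)) - cdf ν (x (Tuple.sort x i))}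
  have hsub : {ω | (n : ℝ) ^ τ *
      |1 / ((n : ℝ) + 1) - (ν (Ioc (sorted ω i) (sorted ω v))).toReal| > ε} ⊆
      (fun ω j => Y j ω) ⁻¹' S := fun ω hω => by
    have hle : cdf ν (sorted ω i) ≤ cdf ν (sorted ω v) := monotone_cdf ν <| by
      rw [hsorted, hsorted]
      exact Tuple.monotone_sort (fun j => Y j ω) (Fin.le_def.2 (Nat.sub_le _ 1) : i ≤ v)
    rw [mem_ofPred_eq, measure_Ioc_eq_ofReal_cdf_sub, ENNReal.toReal_ofReal (sub_nonneg.2 hle)]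
      at hω
    have hgap := add_div_rpow_lt_of_lt_rpow_mul_abs_sub hn hε (sub_nonneg.2 hle)
      ((le_max_left _ _).trans_lt hlarge) hω
    rwa [hsorted, hsorted] at hgap
  calc _ ≤ P ((fun ω j => Y j ω) ⁻¹' S) := measure_mono hsub
    _ ≤ P.map (fun ω j => Y j ω) S := Measure.le_map_apply (aemeasurable_pi_lambda _ hY) S
    _ = Measure.pi (fun _ => ν) S := by rw [hindep.map_fun_eq_pi_map hY, funext hident]
    _ ≤ ENNReal.ofReal (Real.exp (-n * t)) :=
      pi_cdf_sort_spacing_gt_le_exp hFcont (Nat.sub_add_cancel hv) (by positivity)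
    _ ≤ _ := ENNReal.ofReal_le_ofReal (Real.exp_le_exp.2 (by
      simpa only [neg_mul, neg_le_neg_iff] using rpow_one_sub_mul_le_mul_add_div_rpow hn τ ε))

/-- Concentration on focal sets: for i.i.d. continuous data, with `Pi` assigning
`1/(n+1)` to each order-statistic interval `A_n(v) = (Y_(v-1), Y_(v)]`, and `P(A_n(v))`
its true probability, for `n` large enough,
`P(n^τ |Pi(A_n(v)) - P(A_n(v))| > ε) ≤ exp(-n^{1-τ} ε)`. -/
theorem focal_set_concentration
    {Ω : Type*} [MeasurableSpace Ω] (P : Measure Ω) [IsProbabilityMeasure P]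
    (n : ℕ) (hn : 0 < n) (Y : Fin n → Ω → ℝ)
    (hmeas : ∀ i, Measurable (Y i))
    (hindep : iIndepFun Y P)
    (ν : Measure ℝ) [IsProbabilityMeasure ν]
    (hident : ∀ i, Measure.map (Y i) P = ν)
    (F : ℝ → ℝ) (hF : ∀ y, F y = (ν (Set.Iic y)).toReal)
    (hFcont : Continuous F)
    (sorted : Ω → Fin n → ℝ)
    (hsorted : ∀ ω i, sorted ω i = Y (Tuple.sort (fun j => Y j ω) i) ω)
    (v : Fin n) (hv : 1 ≤ (v : ℕ))
    (τ : ℝ) (hτ : τ ∈ Set.Ico (0 : ℝ) 1) (ε : ℝ) (hε : 0 < ε)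
    (hlarge : (n : ℝ) > max (((n : ℝ) ^ τ - ε) / ε) (ε / ((n : ℝ) ^ τ - ε))) :
    P {ω | (n : ℝ) ^ τ *
        |1 / ((n : ℝ) + 1) -
          (ν (Set.Ioc (sorted ω ⟨(v : ℕ) - 1, lt_of_le_of_lt (Nat.sub_le _ _) v.isLt⟩)
            (sorted ω v))).toReal| > ε}
      ≤ ENNReal.ofReal (Real.exp (-(n : ℝ) ^ (1 - τ) * ε)) :=
  focal_set_concentration_general P n Y hindep ν hident F hF hFcont sorted hsorted v hv τ ε hε
    hlarge
end

section
/- Let Y_1, ..., Y_n be i.i.d. continuous real random variables with CDF F and distribution P. Let M be the number of order-statistic focal sets intersecting (-infinity, y], so that Z := M - 1{M > 0} is binomial(n, F(y)) distributed (Z counts the Y_i with Y_i <= y). Then for any y with F(y) > 0, gamma in [0, 0.5), epsilon > 0, and n > 4n^gamma/epsilon - 1, the piecewise-uniform GF approximation Pi satisfies P(n^gamma * |Pi((-infinity, y]) - F(y)| > epsilon) <= 2 exp(-(epsilon^2/8) n^{1-2*gamma}) + exp(-n F(y)). -/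
/-!
Almost surely the sample has no ties, so its order statistics are strictly increasing. Then, if
`Z = #{i | Y i ≤ y} ≥ 1`, the focal sets `A(1), …, A(Z)` lie in `(-∞, y]`, `A(Z+1)` is cut by `y`
and the others miss it, so `(n + 1) Π((-∞, y]) ∈ [Z, Z + 1]` and
`|Π((-∞, y]) - Z / n| ≤ 1 / (n + 1) < ε / (4 n^γ)`. A deviation of `Π` by more than `ε / n^γ`
therefore forces either `Z = 0`, of probability `(1 - F y)^n ≤ exp(-n F y)`, or
`|Z - n F y| ≥ 3 n ε / (4 n^γ)`, which Hoeffding's inequality bounds by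
`2 exp(-(9/8) ε² n^{1-2γ})`.
-/

open MeasureTheory ProbabilityTheory Finset Real

lemma Fin.sum_ite_one_le_and_lt (n m : ℕ) :
    ∑ i : Fin n, (if 1 ≤ (i : ℕ) ∧ (i : ℕ) < m then (1 : ℝ) else 0) = ((min m n - 1 : ℕ) : ℝ) := by
  rw [Fin.sum_univ_eq_sum_range (fun k => if 1 ≤ k ∧ k < m then (1 : ℝ) else 0), sum_boole]
  have : (range n).filter (fun k => 1 ≤ k ∧ k < m) = Ico 1 (min m n) := by
    ext k
    simp only [mem_filter, mem_range, mem_Ico, lt_min_iff]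
    omega
  rw [this, Nat.card_Ico]

lemma Monotone.le_iff_lt_card_filter {n : ℕ} {g : Fin n → ℝ} (hg : Monotone g) (y : ℝ)
    (i : Fin n) : g i ≤ y ↔ (i : ℕ) < #{j | g j ≤ y} := by
  constructor
  · intro hi
    have hsub : Iic i ⊆ ({j | g j ≤ y} : Finset (Fin n)) := fun j hj => by
      simp only [mem_filter, mem_univ, true_and]
      exact (hg (mem_Iic.1 hj)).trans hi
    have := card_le_card hsub
    rw [Fin.card_Iic] at this
    omega
  · intro hi
    by_contra! hyi
    have hsub : ({j | g j ≤ y} : Finset (Fin n)) ⊆ Iio i := fun j hj => by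
      simp only [mem_filter, mem_univ, true_and] at hj
      exact mem_Iio.2 (lt_of_not_ge fun hij => (hyi.trans_le (hg hij)).not_ge hj)
    have := card_le_card hsub
    rw [Fin.card_Iio] at this
    omega

lemma min_one_max_zero_div_eq_one {a b y : ℝ} (hab : a < b) (hby : b ≤ y) :
    min 1 (max 0 ((y - a) / (b - a))) = 1 := by
  have : 1 ≤ (y - a) / (b - a) := by
    rw [le_div_iff₀ (by linarith)]
    linarith
  rw [max_eq_right (by linarith), min_eq_left this]

lemma min_one_max_zero_div_eq_zero {a b y : ℝ} (hab : a ≤ b) (hya : y < a) :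
    min 1 (max 0 ((y - a) / (b - a))) = 0 := by
  rw [max_eq_left (div_nonpos_of_nonpos_of_nonneg (by linarith) (by linarith)),
    min_eq_right zero_le_one]

section PiecewiseUniformCDF

variable {n : ℕ} {g : Fin n → ℝ} {y : ℝ}

/-- The fraction of the gap `(g (i-1), g i]` lying in `(-∞, y]`; `0` for `i = 0`. -/
noncomputable def gapFraction (g : Fin n → ℝ) (y : ℝ) (i : Fin n) : ℝ :=
  if 1 ≤ (i : ℕ) then
    min 1 (max 0 ((y - g ⟨(i : ℕ) - 1, lt_of_le_of_lt (Nat.sub_le _ _) i.isLt⟩)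
      / (g i - g ⟨(i : ℕ) - 1, lt_of_le_of_lt (Nat.sub_le _ _) i.isLt⟩)))
  else 0

/-- `Π((-∞, y])` for the order statistics `g 0 ≤ ⋯ ≤ g (n-1)`: the focal sets `{g 0}`,
`(g (i-1), g i]` and the truncated last one `{g (n-1)}` carry `1 / (n + 1)` each, spread
uniformly. -/
noncomputable def piecewiseUniformCDF (hn : 0 < n) (g : Fin n → ℝ) (y : ℝ) : ℝ :=
  (1 / ((n : ℝ) + 1)) *
    ((if g ⟨0, hn⟩ ≤ y then 1 else 0) + (if g ⟨n - 1, Nat.sub_lt hn one_pos⟩ ≤ y then 1 else 0)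
      + ∑ i, gapFraction g y i)

lemma card_sub_one_le_sum_gapFraction (hg : StrictMono g) :
    ((#{j | g j ≤ y} - 1 : ℕ) : ℝ) ≤ ∑ i, gapFraction g y i := by
  have key := hg.monotone.le_iff_lt_card_filter y
  rw [← min_eq_left ((card_le_univ _).trans_eq (Fintype.card_fin n)),
    ← Fin.sum_ite_one_le_and_lt]
  refine sum_le_sum fun i _ => ?_
  unfold gapFraction
  split_ifs with h h'
  · exact (min_one_max_zero_div_eq_one (hg (Fin.lt_def.2 (by dsimp only; omega)))
      ((key i).2 h.2)).ge
  · exact absurd h.1 h'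
  · exact le_min zero_le_one (le_max_left _ _)
  · exact le_rfl

lemma sum_gapFraction_le (hg : Monotone g) :
    ∑ i, gapFraction g y i ≤ ((min (#{j | g j ≤ y} + 1) n - 1 : ℕ) : ℝ) := by
  rw [← Fin.sum_ite_one_le_and_lt]
  refine sum_le_sum fun i _ => ?_
  unfold gapFraction
  split_ifs with h h' h'
  · exact min_le_left _ _
  · refine (min_one_max_zero_div_eq_zero (hg (Fin.le_def.2 (by simp)))
      (not_le.1 fun hy => ?_)).le
    have := (hg.le_iff_lt_card_filter y _).1 hy
    simp only at this
    omega
  · exact absurd h'.1 h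
  · exact le_rfl

variable (hn : 0 < n)

lemma add_one_mul_piecewiseUniformCDF_mem_Icc (hg : StrictMono g) (h0 : g ⟨0, hn⟩ ≤ y) :
    ((n : ℝ) + 1) * piecewiseUniformCDF hn g y ∈
      Set.Icc (#{j | g j ≤ y} : ℝ) (#{j | g j ≤ y} + 1) := by
  set Z := #{j | g j ≤ y}
  have key := hg.monotone.le_iff_lt_card_filter y
  have hZ : 0 < Z := (key _).1 h0
  have hZn : Z ≤ n := (card_le_univ _).trans_eq (Fintype.card_fin n)
  have hT_ge := card_sub_one_le_sum_gapFraction (y := y) hg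
  have hT_le := sum_gapFraction_le (y := y) hg.monotone
  have hlast := key ⟨n - 1, Nat.sub_lt hn one_pos⟩
  simp only at hlast
  rw [Nat.cast_sub hZ, Nat.cast_one] at hT_ge
  rw [piecewiseUniformCDF, if_pos h0, ← mul_assoc, mul_one_div_cancel (by positivity), one_mul]
  constructor
  · split_ifs <;> linarith
  · rcases hZn.lt_or_eq with hlt | heq
    · rw [if_neg (by rw [hlast]; omega)]
      rw [show min (Z + 1) n - 1 = Z by omega] at hT_le
      linarith
    · rw [if_pos (by rw [hlast]; omega)]
      rw [show min (Z + 1) n - 1 = Z - 1 by omega, Nat.cast_sub hZ, Nat.cast_one] at hT_le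
      linarith

lemma abs_piecewiseUniformCDF_sort_sub_le {f : Fin n → ℝ} (hf : Function.Injective f)
    (hy : ∃ i, f i ≤ y) :
    |piecewiseUniformCDF hn (f ∘ Tuple.sort f) y - #{i | f i ≤ y} / n| ≤ 1 / (n + 1) := by
  set σ := Tuple.sort f
  have hmono : StrictMono (f ∘ σ) :=
    (Tuple.monotone_sort f).strictMono_of_injective (hf.comp σ.injective)
  have hcard : #{j | (f ∘ σ) j ≤ y} = #{i | f i ≤ y} := card_equiv σ fun j => by simp
  obtain ⟨i, hi⟩ := hy
  have h0 : (f ∘ σ) ⟨0, hn⟩ ≤ y :=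
    (hmono.monotone (Fin.le_def.2 (Nat.zero_le (σ.symm i)))).trans (by simpa using hi)
  obtain ⟨hlo, hhi⟩ := add_one_mul_piecewiseUniformCDF_mem_Icc hn hmono h0
  rw [hcard] at hlo hhi
  set Z : ℝ := ((#{i | f i ≤ y} : ℕ) : ℝ)
  have hZn : Z ≤ n := Nat.cast_le.2 ((card_le_univ _).trans_eq (Fintype.card_fin n))
  have hnpos : (0 : ℝ) < n := by exact_mod_cast hn
  have hlo' : Z / (n + 1) ≤ piecewiseUniformCDF hn (f ∘ σ) y := by
    rwa [div_le_iff₀' (by positivity)]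
  have hhi' : piecewiseUniformCDF hn (f ∘ σ) y ≤ Z / (n + 1) + 1 / (n + 1) := by
    rwa [← add_div, le_div_iff₀' (by positivity)]
  have h1 : Z / (n + 1) ≤ Z / n := div_le_div_of_nonneg_left (by positivity) hnpos (by linarith)
  have h2 : Z / n ≤ Z / (n + 1) + 1 / (n + 1) := by
    rw [← add_div, div_le_div_iff₀ hnpos (by positivity)]
    nlinarith
  rw [abs_sub_le_iff]
  constructor <;> linarith

end PiecewiseUniformCDF

lemma le_abs_sub_mul_of_lt_mul_abs_sub {N a ε u z p : ℝ} (hN : 0 < N) (ha : 0 < a) (hε : 0 < ε)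
    (hlarge : 4 * a / ε - 1 < N) (huz : |u - z / N| ≤ 1 / (N + 1)) (h : ε < a * |u - p|) :
    3 * N * ε / (4 * a) ≤ |z - N * p| := by
  have hgap : 1 / (N + 1) < ε / (4 * a) := by
    rw [div_lt_div_iff₀ (by linarith) (by positivity)]
    rw [div_sub_one hε.ne', div_lt_iff₀ hε] at hlarge
    linarith
  have hup : ε / a < |u - p| := by rwa [div_lt_iff₀ ha, mul_comm]
  have htri : |u - p| ≤ |u - z / N| + |z / N - p| := abs_sub_le _ _ _
  have hsplit : 3 * ε / (4 * a) = ε / a - ε / (4 * a) := by field_simp; ring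
  calc 3 * N * ε / (4 * a) = N * (3 * ε / (4 * a)) := by ring
    _ ≤ N * |z / N - p| := by gcongr; linarith
    _ = |N * (z / N - p)| := by rw [abs_mul, abs_of_pos hN]
    _ = |z - N * p| := by rw [mul_sub, mul_div_cancel₀ _ hN.ne']

lemma forall_lt_or_le_abs_card_sub_of_lt {n : ℕ} (hn : 0 < n) {f : Fin n → ℝ}
    (hf : Function.Injective f) {y a ε p : ℝ} (ha : 0 < a) (hε : 0 < ε)
    (hlarge : 4 * a / ε - 1 < n) (h : ε < a * |piecewiseUniformCDF hn (f ∘ Tuple.sort f) y - p|) :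
    (∀ i, y < f i) ∨ 3 * n * ε / (4 * a) ≤ |(#{i | f i ≤ y} : ℝ) - n * p| := by
  by_cases hy : ∃ i, f i ≤ y
  · exact Or.inr (le_abs_sub_mul_of_lt_mul_abs_sub (by exact_mod_cast hn) ha hε hlarge
      (abs_piecewiseUniformCDF_sort_sub_le hn hf hy) h)
  · push Not at hy
    exact Or.inl hy

lemma mul_rpow_one_sub_two_mul_le {n : ℝ} (hn : 0 < n) (ε γ : ℝ) :
    ε ^ 2 / 8 * n ^ (1 - 2 * γ) ≤ 2 * (3 * n * ε / (4 * n ^ γ)) ^ 2 / n := by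
  have ha : 0 < n ^ γ := by positivity
  rw [rpow_sub hn, rpow_one, mul_comm 2 γ, rpow_mul hn.le, rpow_two]
  have hrhs : 2 * (3 * n * ε / (4 * n ^ γ)) ^ 2 / n = 9 / 8 * (ε ^ 2 * (n / (n ^ γ) ^ 2)) := by
    field_simp
    ring
  have : 0 ≤ ε ^ 2 * (n / (n ^ γ) ^ 2) := by positivity
  rw [hrhs]
  linarith

lemma nullSingletonClass_of_continuous_cdf (ν : Measure ℝ) [IsProbabilityMeasure ν]
    (h : Continuous (cdf ν)) : NullSingletonClass ν where
  measure_singleton a := by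
    rw [← measure_cdf ν, StieltjesFunction.measure_singleton,
      h.continuousWithinAt.leftLim_eq, sub_self, ENNReal.ofReal_zero]

namespace ProbabilityTheory

variable {Ω α : Type*} [MeasurableSpace Ω] [MeasurableSpace α] {P : Measure Ω}

lemma IndepFun.measure_eq_eq_zero [MeasurableEq α] [IsFiniteMeasure P] {X Z : Ω → α}
    (hX : Measurable X) (hZ : Measurable Z) (hXZ : IndepFun X Z P)
    [NullSingletonClass (P.map Z)] : P {ω | X ω = Z ω} = 0 := by
  have hdiag : P {ω | X ω = Z ω} = ((P.map X).prod (P.map Z)) (Set.diagonal α) := by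
    rw [← (indepFun_iff_map_prod_eq_prod_map_map hX.aemeasurable hZ.aemeasurable).1 hXZ,
      Measure.map_apply (hX.prodMk hZ) measurableSet_diagonal]
    rfl
  rw [hdiag, Measure.prod_apply measurableSet_diagonal]
  simp [Set.preimage, Set.diagonal]

lemma iIndepFun.ae_injective [MeasurableEq α] [IsFiniteMeasure P] {ι : Type*} [Countable ι]
    {Y : ι → Ω → α} (hY : iIndepFun Y P) (hmeas : ∀ i, Measurable (Y i))
    (hatom : ∀ i, NullSingletonClass (P.map (Y i))) :
    ∀ᵐ ω ∂P, Function.Injective (fun i => Y i ω) := by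
  have hpair (i j : ι) : ∀ᵐ ω ∂P, Y i ω = Y j ω → i = j := by
    by_cases hij : i = j
    · exact ae_of_all _ fun _ _ => hij
    · have := hatom j
      exact measure_mono_null (fun ω hω => (Classical.not_imp.1 hω).1)
        ((hY.indepFun hij).measure_eq_eq_zero (hmeas i) (hmeas j))
  filter_upwards [ae_all_iff.2 fun i => ae_all_iff.2 (hpair i)] with ω hω i j using hω i j

lemma iIndepFun.measure_iInter_preimage_eq_pow {ι : Type*} [Fintype ι] {Y : ι → Ω → α}
    (hY : iIndepFun Y P) (hmeas : ∀ i, Measurable (Y i)) {ν : Measure α}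
    (hident : ∀ i, P.map (Y i) = ν) {s : Set α} (hs : MeasurableSet s) :
    P (⋂ i, Y i ⁻¹' s) = ν s ^ Fintype.card ι := by
  rw [hY.meas_iInter fun i => ⟨s, hs, rfl⟩]
  simp_rw [← Measure.map_apply (hmeas _) hs, hident, prod_const, card_univ]

lemma iIndepFun.measure_forall_notMem_le {ι : Type*} [Fintype ι] {Y : ι → Ω → α}
    (hY : iIndepFun Y P) (hmeas : ∀ i, Measurable (Y i)) {ν : Measure α}
    [IsProbabilityMeasure ν] (hident : ∀ i, P.map (Y i) = ν) {s : Set α} (hs : MeasurableSet s) :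
    P {ω | ∀ i, Y i ω ∉ s} ≤ ENNReal.ofReal (exp (-Fintype.card ι * ν.real s)) := by
  have hq : 0 ≤ 1 - ν.real s := sub_nonneg.2 measureReal_le_one
  have hset : {ω | ∀ i, Y i ω ∉ s} = ⋂ i, Y i ⁻¹' sᶜ := by
    ext
    simp
  rw [hset, hY.measure_iInter_preimage_eq_pow hmeas hident hs.compl, ← ofReal_measureReal,
    probReal_compl_eq_one_sub hs, ← ENNReal.ofReal_pow hq, neg_mul, ← mul_neg, exp_nat_mul]
  exact ENNReal.ofReal_le_ofReal (pow_le_pow_left₀ hq (one_sub_le_exp_neg _) _)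

variable [IsProbabilityMeasure P]

lemma iIndepFun.measure_le_abs_sum_sub_integral_le {ι : Type*} [Fintype ι] {X : ι → Ω → ℝ}
    (hX : iIndepFun X P) (hmeas : ∀ i, Measurable (X i)) {a b : ℝ}
    (hbound : ∀ i ω, X i ω ∈ Set.Icc a b) {t : ℝ} (ht : 0 ≤ t) :
    P {ω | t ≤ |∑ i, (X i ω - P[X i])|}
      ≤ ENNReal.ofReal (2 * exp (-2 * t ^ 2 / (Fintype.card ι * (b - a) ^ 2))) := by
  have hcentered := hX.comp (fun i (x : ℝ) => x - P[X i]) fun i => measurable_id.sub_const _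
  have hsubG := HasSubgaussianMGF.sum_of_iIndepFun hcentered (s := univ) fun i _ =>
    hasSubgaussianMGF_of_mem_Icc (hmeas i).aemeasurable (ae_of_all _ (hbound i))
  have hvar : 2 * ((∑ _i : ι, (‖b - a‖₊ / 2) ^ 2 : NNReal) : ℝ)
      = Fintype.card ι * (b - a) ^ 2 / 2 := by
    push_cast
    rw [sum_const, card_univ, nsmul_eq_mul, div_pow, Real.norm_eq_abs, sq_abs]
    ring
  have htail (S : Ω → ℝ)
      (hS : P.real {ω | t ≤ S ω} ≤ exp (-t ^ 2 / (Fintype.card ι * (b - a) ^ 2 / 2))) :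
      P {ω | t ≤ S ω} ≤ ENNReal.ofReal (exp (-2 * t ^ 2 / (Fintype.card ι * (b - a) ^ 2))) := by
    rw [← ofReal_measureReal]
    refine ENNReal.ofReal_le_ofReal (hS.trans_eq ?_)
    congr 1
    rw [div_div_eq_mul_div]
    ring
  calc P {ω | t ≤ |∑ i, (X i ω - P[X i])|}
      ≤ P {ω | t ≤ ∑ i, (X i ω - P[X i])} + P {ω | t ≤ -∑ i, (X i ω - P[X i])} :=
        (measure_mono fun ω (hω : t ≤ |_|) => le_abs.1 hω).trans (measure_union_le _ _)
    _ ≤ ENNReal.ofReal (exp (-2 * t ^ 2 / (Fintype.card ι * (b - a) ^ 2)))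
        + ENNReal.ofReal (exp (-2 * t ^ 2 / (Fintype.card ι * (b - a) ^ 2))) :=
        add_le_add (htail _ (hvar ▸ hsubG.measure_ge_le ht))
          (htail _ (hvar ▸ hsubG.neg.measure_ge_le ht))
    _ = _ := by rw [← ENNReal.ofReal_add (by positivity) (by positivity), two_mul]

open Classical in
lemma iIndepFun.measure_le_abs_card_sub_le {ι : Type*} [Fintype ι] {Y : ι → Ω → α}
    (hY : iIndepFun Y P) (hmeas : ∀ i, Measurable (Y i)) {ν : Measure α}
    (hident : ∀ i, P.map (Y i) = ν) {s : Set α} (hs : MeasurableSet s) {t : ℝ} (ht : 0 ≤ t) :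
    P {ω | t ≤ |(#{i | Y i ω ∈ s} : ℝ) - Fintype.card ι * ν.real s|}
      ≤ ENNReal.ofReal (2 * exp (-2 * t ^ 2 / Fintype.card ι)) := by
  set X : ι → Ω → ℝ := fun i ω => s.indicator 1 (Y i ω)
  have hind : Measurable (s.indicator (1 : α → ℝ)) := measurable_one.indicator hs
  have hmean (i : ι) : P[X i] = ν.real s := by
    rw [← integral_indicator_one hs, ← hident i,
      integral_map (hmeas i).aemeasurable hind.aestronglyMeasurable]
  have hsum (ω : Ω) : ∑ i, (X i ω - P[X i]) = #{i | Y i ω ∈ s} - Fintype.card ι * ν.real s := by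
    simp only [sum_sub_distrib, hmean, sum_const, card_univ, nsmul_eq_mul, natCast_card_filter]
    simp only [X, Set.indicator_apply, Pi.one_apply]
  have hbound (i : ι) (ω : Ω) : X i ω ∈ Set.Icc 0 1 := by
    by_cases h : Y i ω ∈ s <;> simp [X, h]
  simpa only [hsum, sub_zero, one_pow, mul_one] using
    (hY.comp _ fun _ => hind).measure_le_abs_sum_sub_integral_le (X := X)
      (fun i => hind.comp (hmeas i)) hbound ht

end ProbabilityTheory

open Classical in
theorem gf_pointwise_consistency_general
    {Ω : Type*} [MeasurableSpace Ω] (P : Measure Ω) [IsProbabilityMeasure P]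
    (n : ℕ) (hn : 0 < n) (Y : Fin n → Ω → ℝ)
    (hmeas : ∀ i, Measurable (Y i))
    (hindep : iIndepFun Y P)
    (ν : Measure ℝ) [IsProbabilityMeasure ν]
    (hident : ∀ i, Measure.map (Y i) P = ν)
    (F : ℝ → ℝ) (hF : ∀ t, F t = (ν (Set.Iic t)).toReal)
    (hFcont : Continuous F)
    (sorted : Ω → Fin n → ℝ)
    (hsorted : ∀ ω i, sorted ω i = Y (Tuple.sort (fun j => Y j ω) i) ω)
    (y : ℝ)
    (PiCDF : Ω → ℝ)
    (hPi : ∀ ω, PiCDF ω = (1 / ((n : ℝ) + 1)) *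
      ((if sorted ω ⟨0, hn⟩ ≤ y then 1 else 0)
        + (if sorted ω ⟨n - 1, Nat.sub_lt hn one_pos⟩ ≤ y then 1 else 0)
        + ∑ i : Fin n, if 1 ≤ (i : ℕ) then
            min 1 (max 0 ((y - sorted ω ⟨(i : ℕ) - 1, lt_of_le_of_lt (Nat.sub_le _ _) i.isLt⟩)
              / (sorted ω i - sorted ω ⟨(i : ℕ) - 1, lt_of_le_of_lt (Nat.sub_le _ _) i.isLt⟩)))
          else 0))
    (γ : ℝ) (ε : ℝ) (hε : 0 < ε)
    (hlarge : (n : ℝ) > 4 * (n : ℝ) ^ γ / ε - 1) :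
    P {ω | (n : ℝ) ^ γ * |PiCDF ω - F y| > ε}
      ≤ ENNReal.ofReal (2 * Real.exp (-(ε ^ 2 / 8) * (n : ℝ) ^ (1 - 2 * γ))
          + Real.exp (-(n : ℝ) * F y)) := by
  have hnpos : (0 : ℝ) < n := by exact_mod_cast hn
  have hcdf : cdf ν = F := funext fun t => by rw [cdf_eq_real, hF, measureReal_def]
  have hatom (i : Fin n) : NullSingletonClass (P.map (Y i)) :=
    hident i ▸ nullSingletonClass_of_continuous_cdf ν (hcdf ▸ hFcont)
  have hPi' (ω : Ω) :
      PiCDF ω = piecewiseUniformCDF hn ((fun j => Y j ω) ∘ Tuple.sort fun j => Y j ω) y := by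
    rw [hPi ω, show sorted ω = _ from funext (hsorted ω)]
    rfl
  set t := 3 * n * ε / (4 * (n : ℝ) ^ γ)
  have hevent : ({ω | (n : ℝ) ^ γ * |PiCDF ω - F y| > ε} : Set Ω) ≤ᵐ[P]
      ({ω | ∀ i, Y i ω ∉ Set.Iic y} ∪
        {ω | t ≤ |(#{i | Y i ω ∈ Set.Iic y} : ℝ) - Fintype.card (Fin n) * ν.real (Set.Iic y)|}
        : Set Ω) := by
    filter_upwards [hindep.ae_injective hmeas hatom] with ω hinj hω
    rcases forall_lt_or_le_abs_card_sub_of_lt hn hinj (by positivity) hε hlarge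
      (by rw [← hPi' ω]; exact hω) with hlt | hle
    · exact Or.inl fun i => (hlt i).not_ge
    · right
      rw [Set.mem_ofPred_eq, Fintype.card_fin, measureReal_def, ← hF]
      convert hle using 5
      ext
      simp
  calc P {ω | (n : ℝ) ^ γ * |PiCDF ω - F y| > ε}
      ≤ ENNReal.ofReal (exp (-Fintype.card (Fin n) * ν.real (Set.Iic y)))
        + ENNReal.ofReal (2 * exp (-2 * t ^ 2 / Fintype.card (Fin n))) :=
      (measure_mono_ae hevent).trans <| (measure_union_le _ _).trans <| add_le_add
        (hindep.measure_forall_notMem_le hmeas hident measurableSet_Iic)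
        (hindep.measure_le_abs_card_sub_le hmeas hident measurableSet_Iic (by positivity))
    _ ≤ _ := by
      rw [Fintype.card_fin, measureReal_def, ← hF, add_comm,
        ← ENNReal.ofReal_add (by positivity) (by positivity)]
      have := mul_rpow_one_sub_two_mul_le hnpos ε γ
      gcongr
      rw [neg_mul, neg_div]
      linarith

open Classical in
/-- Pointwise consistency of the piecewise-uniform GF approximation: with focal sets
`A_n(1) = {Y_(1)}`, `A_n(v) = (Y_(v-1), Y_(v)]`, and `A_n(n+1)` truncated to `{Y_(n)}`,
each carrying mass `1/(n+1)` (uniformly), the GF CDF `PiCDF = Π((-∞, y])` satisfies,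
for `F(y) > 0`, `γ ∈ [0,1/2)`, `ε > 0` and `n > 4n^γ/ε - 1`,
`P(n^γ |Π((-∞,y]) - F(y)| > ε) ≤ 2 exp(-(ε²/8) n^{1-2γ}) + exp(-n F(y))`. -/
theorem gf_pointwise_consistency
    {Ω : Type*} [MeasurableSpace Ω] (P : Measure Ω) [IsProbabilityMeasure P]
    (n : ℕ) (hn : 0 < n) (Y : Fin n → Ω → ℝ)
    (hmeas : ∀ i, Measurable (Y i))
    (hindep : iIndepFun Y P)
    (ν : Measure ℝ) [IsProbabilityMeasure ν]
    (hident : ∀ i, Measure.map (Y i) P = ν)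
    (F : ℝ → ℝ) (hF : ∀ t, F t = (ν (Set.Iic t)).toReal)
    (hFcont : Continuous F)
    (sorted : Ω → Fin n → ℝ)
    (hsorted : ∀ ω i, sorted ω i = Y (Tuple.sort (fun j => Y j ω) i) ω)
    (y : ℝ) (hFy : 0 < F y)
    (PiCDF : Ω → ℝ)
    (hPi : ∀ ω, PiCDF ω = (1 / ((n : ℝ) + 1)) *
      ((if sorted ω ⟨0, hn⟩ ≤ y then 1 else 0)
        + (if sorted ω ⟨n - 1, Nat.sub_lt hn one_pos⟩ ≤ y then 1 else 0)
        + ∑ i : Fin n, if 1 ≤ (i : ℕ) then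
            min 1 (max 0 ((y - sorted ω ⟨(i : ℕ) - 1, lt_of_le_of_lt (Nat.sub_le _ _) i.isLt⟩)
              / (sorted ω i - sorted ω ⟨(i : ℕ) - 1, lt_of_le_of_lt (Nat.sub_le _ _) i.isLt⟩)))
          else 0))
    (γ : ℝ) (hγ : γ ∈ Set.Ico (0 : ℝ) (1 / 2)) (ε : ℝ) (hε : 0 < ε)
    (hlarge : (n : ℝ) > 4 * (n : ℝ) ^ γ / ε - 1) :
    P {ω | (n : ℝ) ^ γ * |PiCDF ω - F y| > ε}
      ≤ ENNReal.ofReal (2 * Real.exp (-(ε ^ 2 / 8) * (n : ℝ) ^ (1 - 2 * γ))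
          + Real.exp (-(n : ℝ) * F y)) :=
  gf_pointwise_consistency_general P n hn Y hmeas hindep ν hident F hF hFcont sorted hsorted y PiCDF
    hPi γ ε hε hlarge
end

section
/- Let U_1*, ..., U_m* be i.i.d. uniform(0,1) random variables with order statistics U*_{(1)} <= ... <= U*_{(m)}, and let y in {0, 1, ..., m} (with conventions U*_{(0)} = 0 and U*_{(m+1)} = 1). If D given the U* variables equals 0 with probability U*_{(y)}, equals 1 with probability 1 - U*_{(y+1)}, and is uniform(0,1) with probability U*_{(y+1)} - U*_{(y)}, then R := U*_{(y)} + D*(U*_{(y+1)} - U*_{(y)}) has a beta(y+1, m-y+1) distribution. -/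
/-!
At `a ∈ [0, 1)` the distribution function of `R` is
`P(U_(y+1) ≤ a) + a · P(U_(y) ≤ a < U_(y+1))`. Since `U_(k) ≤ a` exactly when at least `k` of the
`U_i` are `≤ a`, and this count `N` is binomial(m, a), the distribution function is
`P(N ≥ y+1) + a · P(N = y)`. By Pascal's rule for Bernstein polynomials this is the upper tail
`P(N' ≥ y+1)` of a binomial(m+1, a) count, and the derivative of that tail telescopes to the
beta(y+1, m-y+1) density `(m+1) C(m,y) a^y (1-a)^(m-y)`.
-/

open MeasureTheory ProbabilityTheory Polynomial Finset

namespace bernsteinPolynomial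

variable {R : Type*} [CommRing R]

theorem succ_succ (n k : ℕ) :
    bernsteinPolynomial R (n + 1) (k + 1)
      = X * bernsteinPolynomial R n k + (1 - X) * bernsteinPolynomial R n (k + 1) := by
  simp only [bernsteinPolynomial, Nat.choose_succ_succ', Nat.cast_add, Nat.add_sub_add_right]
  rcases lt_or_ge n (k + 1) with hn | hn
  · simp [Nat.choose_eq_zero_of_lt hn]
    ring
  · rw [show n - k = n - (k + 1) + 1 by omega]
    ring

theorem sum_range_degree_succ (n j : ℕ) :
    ∑ k ∈ range (j + 1), bernsteinPolynomial R (n + 1) k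
      = ∑ k ∈ range (j + 1), bernsteinPolynomial R n k - X * bernsteinPolynomial R n j := by
  induction j with
  | zero => simp [bernsteinPolynomial]; ring
  | succ j ih =>
    rw [sum_range_succ, ih, succ_succ, sum_range_succ _ (j + 1)]
    ring

theorem derivative_sum_range (n j : ℕ) :
    derivative (∑ k ∈ range (j + 1), bernsteinPolynomial R (n + 1) k)
      = -((n + 1) * bernsteinPolynomial R n j) := by
  induction j with
  | zero => simp [derivative_zero]; ring
  | succ j ih => rw [sum_range_succ, derivative_add, ih, derivative_succ_aux]; ring

theorem sum_Ico_add_X_mul {n j : ℕ} (hj : j ≤ n) :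
    ∑ k ∈ Ico (j + 1) (n + 1), bernsteinPolynomial R n k + X * bernsteinPolynomial R n j
      = 1 - ∑ k ∈ range (j + 1), bernsteinPolynomial R (n + 1) k := by
  rw [sum_range_degree_succ, ← bernsteinPolynomial.sum R n,
    ← sum_range_add_sum_Ico _ (by omega : j + 1 ≤ n + 1)]
  ring

theorem eval_nonneg (n k : ℕ) {x : ℝ} (hx : x ∈ Set.Icc (0 : ℝ) 1) :
    0 ≤ (bernsteinPolynomial ℝ n k).eval x := by
  simp only [bernsteinPolynomial, eval_mul, eval_pow, eval_sub, eval_one, eval_X, eval_natCast]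
  exact mul_nonneg (mul_nonneg (Nat.cast_nonneg _) (pow_nonneg hx.1 _))
    (pow_nonneg (sub_nonneg.2 hx.2) _)

end bernsteinPolynomial

theorem integral_bernsteinPolynomial (n j : ℕ) (b : ℝ) :
    ∫ x in 0..b, (n + 1) * (bernsteinPolynomial ℝ n j).eval x
      = 1 - ∑ k ∈ range (j + 1), (bernsteinPolynomial ℝ (n + 1) k).eval b := by
  let F : ℝ[X] := 1 - ∑ k ∈ range (j + 1), bernsteinPolynomial ℝ (n + 1) k
  have hF : ∀ x, HasDerivAt F.eval ((n + 1) * (bernsteinPolynomial ℝ n j).eval x) x := fun x =>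
    (F.hasDerivAt x).congr_deriv (by
      simp only [F, derivative_sub, derivative_one, bernsteinPolynomial.derivative_sum_range]
      simp)
  rw [intervalIntegral.integral_eq_sub_of_hasDerivAt (fun x _ => hF x)
    ((continuous_const.mul (Polynomial.continuous _)).intervalIntegrable _ _)]
  simp [F, eval_finsetSum, bernsteinPolynomial.eval_at_0]

theorem lintegral_Icc_beta_density (n j : ℕ) {b : ℝ} (hb0 : 0 ≤ b) (hb1 : b ≤ 1) :
    ∫⁻ x in Set.Icc 0 b,
        ENNReal.ofReal (((n : ℝ) + 1) * (n.choose j : ℝ) * x ^ j * (1 - x) ^ (n - j))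
      = ENNReal.ofReal (1 - ∑ k ∈ range (j + 1), (bernsteinPolynomial ℝ (n + 1) k).eval b) := by
  have hdens : ∀ x : ℝ, ((n : ℝ) + 1) * (n.choose j : ℝ) * x ^ j * (1 - x) ^ (n - j)
      = (n + 1) * (bernsteinPolynomial ℝ n j).eval x := fun x => by
    simp only [bernsteinPolynomial, eval_mul, eval_pow, eval_sub, eval_one, eval_X, eval_natCast]
    ring
  simp_rw [hdens]
  rw [← ofReal_integral_eq_lintegral_ofReal, integral_Icc_eq_integral_Ioc,
    ← intervalIntegral.integral_of_le hb0, integral_bernsteinPolynomial]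
  · exact (continuous_const.mul (Polynomial.continuous _)).integrableOn_Icc
  · filter_upwards [ae_restrict_mem measurableSet_Icc] with x hx
    exact mul_nonneg (by positivity) (bernsteinPolynomial.eval_nonneg n j ⟨hx.1, hx.2.trans hb1⟩)

theorem Tuple.apply_sort_le_iff {α : Type*} [LinearOrder α] {m : ℕ} (f : Fin m → α)
    (j : Fin m) (a : α) : f (Tuple.sort f j) ≤ a ↔ (j : ℕ) < #{i | f i ≤ a} := by
  have hcard : #{i | f (Tuple.sort f i) ≤ a} = #{i | f i ≤ a} :=
    card_equiv (Tuple.sort f) (by simp)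
  rw [← hcard]
  exact (Tuple.lt_card_le_iff_apply_le_of_monotone (f := f ∘ Tuple.sort f)
    (Tuple.monotone_sort f)).symm

noncomputable def orderStat {m : ℕ} (f : Fin m → ℝ) (k : ℕ) : ℝ :=
  if hk : k = 0 then 0 else if hkm : k ≤ m then f (Tuple.sort f ⟨k - 1, by omega⟩) else 1

section orderStat

variable {m : ℕ} {f : Fin m → ℝ}

theorem orderStat_le_iff (k : ℕ) {a : ℝ} (ha0 : 0 ≤ a) (ha1 : a < 1) :
    orderStat f k ≤ a ↔ k ≤ #{i | f i ≤ a} := by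
  unfold orderStat
  split_ifs with h0 hkm
  · simp [h0, ha0]
  · rw [Tuple.apply_sort_le_iff, Fin.val_mk]
    omega
  · have : #{i | f i ≤ a} ≤ m := (card_le_univ _).trans_eq (Fintype.card_fin m)
    exact iff_of_false (by linarith) (by omega)

theorem orderStat_mem_Icc (hf : ∀ i, f i ∈ Set.Icc 0 1) (k : ℕ) :
    orderStat f k ∈ Set.Icc 0 1 := by
  unfold orderStat
  split_ifs
  exacts [⟨le_rfl, zero_le_one⟩, hf _, ⟨zero_le_one, le_rfl⟩]

theorem orderStat_monotone (hf : ∀ i, f i ∈ Set.Icc 0 1) : Monotone (orderStat f) := by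
  refine monotone_nat_of_le_succ fun k => ?_
  rcases Nat.eq_zero_or_pos k with rfl | hk
  · exact (orderStat_mem_Icc hf 1).1.trans_eq' (by simp [orderStat])
  · by_cases hkm : k + 1 ≤ m
    · simp only [orderStat, dif_pos hkm, dif_pos (show k ≤ m by omega), dif_neg hk.ne',
        dif_neg k.succ_ne_zero]
      exact Tuple.monotone_sort f (Fin.mk_le_mk.2 (by omega))
    · exact (orderStat_mem_Icc hf k).2.trans_eq (by simp [orderStat, hkm])

end orderStat

theorem measurable_card_filter_le {ι Ω : Type*} [Fintype ι] [MeasurableSpace Ω]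
    {U : ι → Ω → ℝ} (hmeas : ∀ i, Measurable (U i)) (a : ℝ) :
    Measurable fun ω => #{i | U i ω ≤ a} := by
  simp_rw [card_filter]
  exact Finset.measurable_sum _ fun i _ =>
    Measurable.ite (hmeas i measurableSet_Iic) measurable_const measurable_const

theorem measurable_orderStat {Ω : Type*} [MeasurableSpace Ω] {m : ℕ} {U : Fin m → Ω → ℝ}
    (hmeas : ∀ i, Measurable (U i)) (k : ℕ) :
    Measurable fun ω => orderStat (fun i => U i ω) k := by
  unfold orderStat
  split_ifs
  · exact measurable_const
  · refine measurable_of_Iic fun a => ?_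
    convert measurable_card_filter_le hmeas a (measurableSet_Ioi (a := k - 1)) using 1
    ext ω
    exact Tuple.apply_sort_le_iff (fun i => U i ω) _ a
  · exact measurable_const

theorem setOf_filter_le_eq {ι Ω : Type*} [Fintype ι] [DecidableEq ι] (U : ι → Ω → ℝ) (a : ℝ)
    (S : Finset ι) :
    {ω | ({i | U i ω ≤ a} : Finset ι) = S}
      = ⋂ i, U i ⁻¹' (if i ∈ S then Set.Iic a else Set.Ioi a) := by
  ext ω
  simp only [Set.mem_ofPred_eq, Finset.ext_iff, mem_filter_univ, Set.mem_iInter, Set.mem_preimage]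
  refine forall_congr' fun i => ?_
  split_ifs with hi <;> simp [hi]

section binomial

variable {ι Ω : Type*} [Fintype ι] [DecidableEq ι] [MeasurableSpace Ω] {P : Measure Ω}
  [IsProbabilityMeasure P] {U : ι → Ω → ℝ}

theorem measure_filter_le_eq (hmeas : ∀ i, Measurable (U i)) (hindep : iIndepFun U P)
    {a q : ℝ} (hq0 : 0 ≤ q) (hq : ∀ i, P {ω | U i ω ≤ a} = ENNReal.ofReal q) (S : Finset ι) :
    P {ω | ({i | U i ω ≤ a} : Finset ι) = S}
      = ENNReal.ofReal q ^ #S * ENNReal.ofReal (1 - q) ^ (Fintype.card ι - #S) := by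
  have hgt : ∀ i, P (U i ⁻¹' Set.Ioi a) = ENNReal.ofReal (1 - q) := fun i => by
    rw [← Set.compl_Iic, Set.preimage_compl, prob_compl_eq_one_sub (hmeas i measurableSet_Iic),
      ENNReal.ofReal_sub _ hq0, ENNReal.ofReal_one]
    exact congrArg _ (hq i)
  rw [setOf_filter_le_eq U, hindep.meas_iInter fun i => ⟨_, by split_ifs <;> measurability, rfl⟩]
  have hP : ∀ i, P (U i ⁻¹' if i ∈ S then Set.Iic a else Set.Ioi a)
      = if i ∈ S then ENNReal.ofReal q else ENNReal.ofReal (1 - q) := fun i => by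
    split_ifs
    exacts [hq i, hgt i]
  simp only [hP, prod_ite, prod_const]
  rw [filter_notMem_eq_sdiff, card_univ_sdiff, filter_mem_eq_inter, univ_inter]

theorem measure_card_filter_le_eq (hmeas : ∀ i, Measurable (U i)) (hindep : iIndepFun U P)
    {a q : ℝ} (hq0 : 0 ≤ q) (hq1 : q ≤ 1) (hq : ∀ i, P {ω | U i ω ≤ a} = ENNReal.ofReal q)
    (j : ℕ) :
    P {ω | #{i | U i ω ≤ a} = j}
      = ENNReal.ofReal ((bernsteinPolynomial ℝ (Fintype.card ι) j).eval q) := by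
  have hfiber : ∀ S : Finset ι, MeasurableSet {ω | ({i | U i ω ≤ a} : Finset ι) = S} := by
    intro S
    rw [setOf_filter_le_eq U]
    exact MeasurableSet.iInter fun i => hmeas i (by split_ifs <;> measurability)
  have hcard : {ω | #{i | U i ω ≤ a} = j}
      = (fun ω => ({i | U i ω ≤ a} : Finset ι)) ⁻¹' ↑(powersetCard j (univ : Finset ι)) := by
    ext ω
    simp
  have hS : ∀ S ∈ powersetCard j (univ : Finset ι),
      P ((fun ω => ({i | U i ω ≤ a} : Finset ι)) ⁻¹' {S})
        = ENNReal.ofReal q ^ j * ENNReal.ofReal (1 - q) ^ (Fintype.card ι - j) := fun S hS => by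
    rw [← mem_powersetCard_univ.1 hS]
    exact measure_filter_le_eq hmeas hindep hq0 hq S
  rw [hcard, ← sum_measure_preimage_singleton _ fun S _ => hfiber S, sum_congr rfl hS, sum_const,
    card_powersetCard, card_univ, nsmul_eq_mul]
  simp only [bernsteinPolynomial, eval_mul, eval_pow, eval_sub, eval_one, eval_X, eval_natCast]
  rw [ENNReal.ofReal_mul (by positivity), ENNReal.ofReal_mul (by positivity),
    ENNReal.ofReal_pow hq0, ENNReal.ofReal_pow (sub_nonneg.2 hq1), ENNReal.ofReal_natCast]
  ring

theorem measure_le_card_filter_le (hmeas : ∀ i, Measurable (U i)) (hindep : iIndepFun U P)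
    {a q : ℝ} (hq0 : 0 ≤ q) (hq1 : q ≤ 1) (hq : ∀ i, P {ω | U i ω ≤ a} = ENNReal.ofReal q)
    (j : ℕ) :
    P {ω | j ≤ #{i | U i ω ≤ a}}
      = ∑ k ∈ Ico j (Fintype.card ι + 1),
          ENNReal.ofReal ((bernsteinPolynomial ℝ (Fintype.card ι) k).eval q) := by
  have htail : {ω | j ≤ #{i | U i ω ≤ a}}
      = (fun ω => #{i | U i ω ≤ a}) ⁻¹' ↑(Ico j (Fintype.card ι + 1)) := by
    ext ω
    simp [card_le_univ]
  rw [htail, ← sum_measure_preimage_singleton _ fun k _ =>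
    measurable_card_filter_le hmeas a (measurableSet_singleton k)]
  exact sum_congr rfl fun k _ => measure_card_filter_le_eq hmeas hindep hq0 hq1 hq k

end binomial

noncomputable def fiducialMixture (p : ℝ × ℝ) : Measure ℝ :=
  ENNReal.ofReal p.1 • Measure.dirac p.1 + ENNReal.ofReal (1 - p.2) • Measure.dirac p.2
    + volume.restrict (Set.Ioo p.1 p.2)

theorem measurable_fiducialMixture : Measurable fiducialMixture := by
  refine Measure.measurable_of_measurable_coe _ fun s hs => ?_
  have hvol : Measurable fun p : ℝ × ℝ => volume.restrict (Set.Ioo p.1 p.2) s := by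
    have hS : MeasurableSet {q : (ℝ × ℝ) × ℝ | q.2 ∈ s ∧ q.1.1 < q.2 ∧ q.2 < q.1.2} := by
      measurability
    convert measurable_measure_prodMk_left (ν := volume) hS using 2 with p
    rw [Measure.restrict_apply hs]
    rfl
  simp only [fiducialMixture, Measure.add_apply, Measure.smul_apply, smul_eq_mul,
    Measure.dirac_apply' _ hs]
  refine Measurable.add (Measurable.add ?_ ?_) hvol <;> fun_prop (disch := measurability)

theorem fiducialMixture_Iic {p₁ p₂ : ℝ} (h₀ : 0 ≤ p₁) (h₁₂ : p₁ ≤ p₂) (h₂ : p₂ ≤ 1) (a : ℝ) :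
    fiducialMixture (p₁, p₂) (Set.Iic a)
      = (if p₂ ≤ a then 1 else 0) + if p₁ ≤ a ∧ a < p₂ then ENNReal.ofReal a else 0 := by
  simp only [fiducialMixture, Measure.add_apply, Measure.smul_apply, smul_eq_mul,
    Measure.dirac_apply' _ measurableSet_Iic, Measure.restrict_apply measurableSet_Iic]
  rcases lt_or_ge a p₁ with ha | ha
  · have hempty : Set.Iic a ∩ Set.Ioo p₁ p₂ = ∅ := by
      ext x; simp only [Set.mem_inter_iff, Set.mem_Iic, Set.mem_Ioo]; grind
    simp [hempty, not_le.2 (ha.trans_le h₁₂), not_le.2 ha]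
  rcases lt_or_ge a p₂ with ha' | ha'
  · have hIoc : Set.Iic a ∩ Set.Ioo p₁ p₂ = Set.Ioc p₁ a := by
      ext x; simp only [Set.mem_inter_iff, Set.mem_Iic, Set.mem_Ioo, Set.mem_Ioc]; grind
    simp only [hIoc, Real.volume_Ioc, Set.indicator_of_mem (Set.mem_Iic.2 ha), Pi.one_apply,
      Set.indicator_of_notMem (Set.notMem_Iic.2 ha'), if_neg (not_le.2 ha'),
      if_pos (⟨ha, ha'⟩ : p₁ ≤ a ∧ a < p₂), mul_one, mul_zero, add_zero, zero_add]
    rw [← ENNReal.ofReal_add h₀ (sub_nonneg.2 ha), add_sub_cancel]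
  · have hIoo : Set.Iic a ∩ Set.Ioo p₁ p₂ = Set.Ioo p₁ p₂ := by
      ext x; simp only [Set.mem_inter_iff, Set.mem_Iic, Set.mem_Ioo]; grind
    simp only [hIoo, Real.volume_Ioo, Set.indicator_of_mem (Set.mem_Iic.2 ha), Pi.one_apply,
      Set.indicator_of_mem (Set.mem_Iic.2 ha'), if_pos ha', not_lt.2 ha', and_false, if_false,
      mul_one, add_zero]
    rw [← ENNReal.ofReal_add h₀ (by linarith), ← ENNReal.ofReal_add (by linarith) (by linarith)]
    convert ENNReal.ofReal_one using 2
    ring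

section pair

variable {Ω : Type*} [MeasurableSpace Ω] {P : Measure Ω} {X Y : Ω → ℝ}

theorem bind_fiducialMixture_Iic (hX : Measurable X) (hY : Measurable Y)
    (hXY : ∀ᵐ ω ∂P, 0 ≤ X ω ∧ X ω ≤ Y ω ∧ Y ω ≤ 1) (a : ℝ) :
    (P.map fun ω => (X ω, Y ω)).bind fiducialMixture (Set.Iic a)
      = P {ω | Y ω ≤ a} + ENNReal.ofReal a * P {ω | X ω ≤ a ∧ a < Y ω} := by
  have hYa : MeasurableSet {ω | Y ω ≤ a} := hY measurableSet_Iic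
  have hXYa : MeasurableSet {ω | X ω ≤ a ∧ a < Y ω} :=
    (hX measurableSet_Iic).inter (hY measurableSet_Ioi)
  rw [Measure.bind_apply measurableSet_Iic measurable_fiducialMixture.aemeasurable,
    lintegral_map (f := fun p => fiducialMixture p (Set.Iic a))
      ((Measure.measurable_coe measurableSet_Iic).comp measurable_fiducialMixture) (hX.prodMk hY),
    ← lintegral_indicator_one hYa, ← lintegral_indicator_const hXYa, ← lintegral_add_left
      (measurable_one.indicator hYa)]
  refine lintegral_congr_ae (hXY.mono fun ω h => ?_)
  simp only [fiducialMixture_Iic h.1 h.2.1 h.2.2, Set.indicator_apply, Set.mem_ofPred_eq,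
    Pi.one_apply]

theorem bind_fiducialMixture_Iic_of_neg (hX : Measurable X) (hY : Measurable Y)
    (hXY : ∀ᵐ ω ∂P, 0 ≤ X ω ∧ X ω ≤ Y ω ∧ Y ω ≤ 1) {a : ℝ} (ha : a < 0) :
    (P.map fun ω => (X ω, Y ω)).bind fiducialMixture (Set.Iic a) = 0 := by
  have hYa : P {ω | Y ω ≤ a} = 0 := measure_eq_zero_iff_ae_notMem.2 <| hXY.mono fun ω h => by
    simp only [Set.mem_ofPred_eq, not_le]; linarith
  have hXa : P {ω | X ω ≤ a ∧ a < Y ω} = 0 :=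
    measure_eq_zero_iff_ae_notMem.2 <| hXY.mono fun ω h => by
      simp only [Set.mem_ofPred_eq, not_and, not_lt]; intro; linarith
  rw [bind_fiducialMixture_Iic hX hY hXY, hYa, hXa, mul_zero, add_zero]

theorem bind_fiducialMixture_Iic_of_one_le [IsProbabilityMeasure P] (hX : Measurable X)
    (hY : Measurable Y)    (hXY : ∀ᵐ ω ∂P, 0 ≤ X ω ∧ X ω ≤ Y ω ∧ Y ω ≤ 1) {a : ℝ} (ha : 1 ≤ a) :
    (P.map fun ω => (X ω, Y ω)).bind fiducialMixture (Set.Iic a) = 1 := by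
  have hYa : P {ω | Y ω ≤ a} = 1 := (mem_ae_iff_prob_eq_one (hY measurableSet_Iic)).1 <|
    hXY.mono fun ω h => h.2.2.trans ha
  have hXa : P {ω | X ω ≤ a ∧ a < Y ω} = 0 :=
    measure_eq_zero_iff_ae_notMem.2 <| hXY.mono fun ω h => by
      simp only [Set.mem_ofPred_eq, not_and, not_lt]; intro; linarith
  rw [bind_fiducialMixture_Iic hX hY hXY, hYa, hXa, mul_zero, add_zero]

end pair

theorem measure_le_of_map_eq_uniform {Ω : Type*} [MeasurableSpace Ω] {P : Measure Ω} {V : Ω → ℝ}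
    (hV : Measurable V) (hunif : P.map V = volume.restrict (Set.Ioo 0 1)) {a : ℝ} (ha1 : a < 1) :
    P {ω | V ω ≤ a} = ENNReal.ofReal a := by
  have hIoc : Set.Iic a ∩ Set.Ioo 0 1 = Set.Ioc 0 a := by
    ext x
    simp only [Set.mem_inter_iff, Set.mem_Iic, Set.mem_Ioo, Set.mem_Ioc]
    grind
  change P (V ⁻¹' Set.Iic a) = _
  rw [← Measure.map_apply hV measurableSet_Iic, hunif,
    Measure.restrict_apply measurableSet_Iic, hIoc, Real.volume_Ioc, sub_zero]

section uniform

variable {Ω : Type*} [MeasurableSpace Ω] {P : Measure Ω} [IsProbabilityMeasure P] {m : ℕ}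
  {U : Fin m → Ω → ℝ}

theorem measure_orderStat_le_add (hmeas : ∀ i, Measurable (U i)) (hindep : iIndepFun U P)
    (hunif : ∀ i, P.map (U i) = volume.restrict (Set.Ioo 0 1)) {y : ℕ} (hy : y ≤ m) {a : ℝ}
    (ha0 : 0 ≤ a) (ha1 : a < 1) :
    P {ω | orderStat (fun i => U i ω) (y + 1) ≤ a}
        + ENNReal.ofReal a * P {ω | orderStat (fun i => U i ω) y ≤ a
            ∧ a < orderStat (fun i => U i ω) (y + 1)}
      = ENNReal.ofReal (1 - ∑ k ∈ range (y + 1), (bernsteinPolynomial ℝ (m + 1) k).eval a) := by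
  have hq := fun i => measure_le_of_map_eq_uniform (hmeas i) (hunif i) ha1
  have hnonneg := fun k => bernsteinPolynomial.eval_nonneg m k ⟨ha0, ha1.le⟩
  have hexact : {ω | y ≤ #{i | U i ω ≤ a} ∧ ¬ y + 1 ≤ #{i | U i ω ≤ a}}
      = {ω | #{i | U i ω ≤ a} = y} := by
    ext ω
    simp only [Set.mem_ofPred_eq]
    omega
  simp_rw [← not_le, orderStat_le_iff _ ha0 ha1]
  rw [hexact, measure_le_card_filter_le hmeas hindep ha0 ha1.le hq,
    measure_card_filter_le_eq hmeas hindep ha0 ha1.le hq, Fintype.card_fin,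
    ← ENNReal.ofReal_sum_of_nonneg fun k _ => hnonneg k, ← ENNReal.ofReal_mul ha0,
    ← ENNReal.ofReal_add (sum_nonneg fun k _ => hnonneg k) (mul_nonneg ha0 (hnonneg y))]
  congr 1
  simpa [eval_finsetSum] using congrArg (eval a) (bernsteinPolynomial.sum_Ico_add_X_mul hy)

theorem bind_fiducialMixture_orderStat_Iic (hmeas : ∀ i, Measurable (U i))
    (hindep : iIndepFun U P) (hunif : ∀ i, P.map (U i) = volume.restrict (Set.Ioo 0 1))
    {y : ℕ} (hy : y ≤ m) (a : ℝ) :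
    (P.map fun ω => (orderStat (fun i => U i ω) y, orderStat (fun i => U i ω) (y + 1))).bind
        fiducialMixture (Set.Iic a)
      = ∫⁻ x in Set.Icc 0 1 ∩ Set.Iic a,
          ENNReal.ofReal (((m : ℝ) + 1) * (m.choose y : ℝ) * x ^ y * (1 - x) ^ (m - y)) := by
  have hU : ∀ᵐ ω ∂P, ∀ i, U i ω ∈ Set.Icc 0 1 := ae_all_iff.2 fun i =>
    ae_of_ae_map (hmeas i).aemeasurable <| by
      rw [hunif i]
      exact (ae_restrict_mem measurableSet_Ioo).mono fun x hx => Set.Ioo_subset_Icc_self hx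
  have hXY : ∀ᵐ ω ∂P, 0 ≤ orderStat (fun i => U i ω) y
      ∧ orderStat (fun i => U i ω) y ≤ orderStat (fun i => U i ω) (y + 1)
      ∧ orderStat (fun i => U i ω) (y + 1) ≤ 1 := hU.mono fun ω h =>
    ⟨(orderStat_mem_Icc h y).1, orderStat_monotone h y.le_succ, (orderStat_mem_Icc h (y + 1)).2⟩
  have hX := measurable_orderStat hmeas y
  have hY := measurable_orderStat hmeas (y + 1)
  rcases lt_or_ge a 0 with ha0 | ha0
  · have hempty : Set.Icc (0 : ℝ) 1 ∩ Set.Iic a = ∅ :=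
      Set.eq_empty_of_forall_notMem fun x hx => by linarith [hx.1.1, Set.mem_Iic.1 hx.2]
    rw [bind_fiducialMixture_Iic_of_neg hX hY hXY ha0, hempty, Measure.restrict_empty,
      lintegral_zero_measure]
  rcases lt_or_ge a 1 with ha1 | ha1
  · have hIcc : Set.Icc (0 : ℝ) 1 ∩ Set.Iic a = Set.Icc 0 a := by
      ext x
      simp only [Set.mem_inter_iff, Set.mem_Icc, Set.mem_Iic]
      grind
    rw [bind_fiducialMixture_Iic hX hY hXY, hIcc, lintegral_Icc_beta_density m y ha0 ha1.le,
      measure_orderStat_le_add hmeas hindep hunif hy ha0 ha1]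
  · rw [bind_fiducialMixture_Iic_of_one_le hX hY hXY ha1,
      Set.inter_eq_left.2 fun x hx => Set.mem_Iic.2 (hx.2.trans ha1),
      lintegral_Icc_beta_density m y zero_le_one le_rfl]
    simp [bernsteinPolynomial.eval_at_1, not_lt.2 hy]

end uniform

/-- Hannig's fourth fiducial-sampling choice yields the Bayes posterior: if
`U 1, …, U m` are i.i.d. uniform(0,1) with order statistics `s k` (conventions
`s 0 = 0`, `s (m+1) = 1`), and `R = s y + D (s (y+1) - s y)` where, given the `U`'s,
`D = 0` w.p. `s y`, `D = 1` w.p. `1 - s (y+1)`, and `D ~ uniform(0,1)` w.p.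
`s (y+1) - s y`, then `R ~ beta(y+1, m-y+1)`. -/
theorem fiducial_mixture_beta
    {Ω : Type*} [MeasurableSpace Ω] (P : Measure Ω) [IsProbabilityMeasure P]
    (m : ℕ) (U : Fin m → Ω → ℝ)
    (hmeas : ∀ i, Measurable (U i))
    (hindep : iIndepFun U P)
    (hunif : ∀ i, Measure.map (U i) P = volume.restrict (Set.Ioo (0 : ℝ) 1))
    (y : ℕ) (hy : y ≤ m)
    (s : ℕ → Ω → ℝ)
    (hs0 : ∀ ω, s 0 ω = 0)
    (hstop : ∀ ω, s (m + 1) ω = 1)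
    (hsmid : ∀ ω k, ∀ h1 : 1 ≤ k, ∀ h2 : k ≤ m,
      s k ω = U (Tuple.sort (fun j => U j ω) ⟨k - 1, by omega⟩) ω)
    (R : Ω → ℝ)
    (hR : Measure.map R P
      = (Measure.map (fun ω => (s y ω, s (y + 1) ω)) P).bind
          (fun p => ENNReal.ofReal p.1 • Measure.dirac p.1
            + ENNReal.ofReal (1 - p.2) • Measure.dirac p.2
            + volume.restrict (Set.Ioo p.1 p.2))) :
    Measure.map R P
      = volume.withDensity (Set.indicator (Set.Icc (0 : ℝ) 1)
          (fun x => ENNReal.ofReal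
            (((m : ℝ) + 1) * (m.choose y : ℝ) * x ^ y * (1 - x) ^ (m - y)))) := by
  have hs : ∀ k ≤ m + 1, s k = fun ω => orderStat (fun i => U i ω) k := by
    intro k hk
    funext ω
    unfold orderStat
    split_ifs with h0 hkm
    · rw [h0, hs0]
    · exact hsmid ω k (by omega) hkm
    · rw [show k = m + 1 by omega, hstop]
  refine Measure.ext_of_Iic _ _ fun a => ?_
  rw [hR, hs y (by omega), hs (y + 1) (by omega), withDensity_apply _ measurableSet_Iic,
    lintegral_indicator measurableSet_Icc, Measure.restrict_restrict measurableSet_Icc]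
  exact bind_fiducialMixture_orderStat_Iic hmeas hindep hunif hy a
end
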